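/- arXiv:math/9912159 — 7 statements merged into one kernel-verified Lean document; each statement's English description precedes it below -/
import Mathlib

section
/- Let N ≥ 1, z₀ ∈ ℂ, W₀ ∈ ℂ^N and a, b > 0. Let F be a ℂ^N-valued function, holomorphic on the product P × D(z₀,a), where P = ∏_{j=1}^N D(W₀^j, b) is the open polydisc of polyradius b centered at W₀ and D(z₀,a) is the open disc of radius a about z₀. Assume that the sup-norm of F on P × D(z₀,a) is at most M, and that for each j = 1,…,N the sup-norm of the partial derivative ∂F/∂w^j on P × D(z₀,a) is at most K. Then for every real r with 0 < r < min(a, b/M, 1/K) there exists a unique holomorphic mapping W : D(z₀,r) → P such that W(z₀) = W₀ and W′(z) = F(W(z), z) for all z ∈ D(z₀,r). -/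
open Metric Set MeasureTheory intervalIntegral Filter Interval

namespace ComplexODE

noncomputable def clampC (z₀ : ℂ) (s : ℝ) (z : ℂ) : ℂ :=
  z₀ + (min 1 (s / ‖z - z₀‖)) • (z - z₀)

lemma clampC_of_mem {z₀ : ℂ} {s : ℝ} {z : ℂ} (hz : z ∈ closedBall z₀ s) :
    clampC z₀ s z = z := by
  rcases eq_or_ne z z₀ with rfl | hne
  · simp [clampC]
  · have hd : 0 < ‖z - z₀‖ := by simpa [sub_eq_zero] using hne
    have hle : ‖z - z₀‖ ≤ s := by simpa [mem_closedBall, dist_eq_norm] using hz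
    have hmin : min 1 (s / ‖z - z₀‖) = 1 := min_eq_left ((le_div_iff₀ hd).2 (by linarith))
    rw [clampC, hmin, one_smul]; ring

lemma clampC_mem (z₀ : ℂ) {s : ℝ} (hs : 0 ≤ s) (z : ℂ) :
    clampC z₀ s z ∈ closedBall z₀ s := by
  rcases eq_or_ne z z₀ with rfl | hne
  · simp [clampC, hs]
  · have hd : 0 < ‖z - z₀‖ := by simpa [sub_eq_zero] using hne
    have hmin : 0 ≤ min 1 (s / ‖z - z₀‖) := le_min zero_le_one (div_nonneg hs (norm_nonneg _))
    have hkey : ‖clampC z₀ s z - z₀‖ = min 1 (s / ‖z - z₀‖) * ‖z - z₀‖ := by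
      have h2 : clampC z₀ s z - z₀ = (min 1 (s / ‖z - z₀‖)) • (z - z₀) :=
        add_sub_cancel_left z₀ _
      rw [h2, norm_smul, Real.norm_eq_abs, abs_of_nonneg hmin]
    rw [mem_closedBall, dist_eq_norm, hkey]
    rcases le_total ‖z - z₀‖ s with h | h
    · calc min 1 (s / ‖z - z₀‖) * ‖z - z₀‖ ≤ 1 * ‖z - z₀‖ := by
            apply mul_le_mul_of_nonneg_right (min_le_left _ _) hd.le
      _ ≤ s := by linarith
    · calc min 1 (s / ‖z - z₀‖) * ‖z - z₀‖ ≤ (s / ‖z - z₀‖) * ‖z - z₀‖ := by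
            apply mul_le_mul_of_nonneg_right (min_le_right _ _) hd.le
      _ = s := div_mul_cancel₀ s hd.ne'

lemma clampC_idem (z₀ : ℂ) {s : ℝ} (hs : 0 ≤ s) (z : ℂ) :
    clampC z₀ s (clampC z₀ s z) = clampC z₀ s z :=
  clampC_of_mem (clampC_mem z₀ hs z)

lemma clampC_norm_le (z₀ : ℂ) {s : ℝ} (hs : 0 ≤ s) (z : ℂ) :
    ‖clampC z₀ s z - z₀‖ ≤ s := by
  have := clampC_mem z₀ hs z
  simpa [mem_closedBall, dist_eq_norm] using this

lemma continuous_clampC (z₀ : ℂ) {s : ℝ} (hs : 0 < s) : Continuous (clampC z₀ s) := by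
  rw [continuous_iff_continuousAt]
  intro z
  rcases eq_or_ne z z₀ with heq | hne
  · subst heq
    have hev : ∀ᶠ w in nhds z, w = clampC z s w := by
      filter_upwards [closedBall_mem_nhds z hs] with w hw using (clampC_of_mem hw).symm
    exact continuousAt_id.congr hev
  · have hd : (0:ℝ) < ‖z - z₀‖ := by simpa [sub_eq_zero] using hne
    have h1 : ContinuousAt (fun w : ℂ => s / ‖w - z₀‖) z :=
      ContinuousAt.div continuousAt_const
        ((continuous_id.sub continuous_const).norm.continuousAt) hd.ne'
    have h2 : ContinuousAt (fun w : ℂ => min 1 (s / ‖w - z₀‖)) z :=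
      continuousAt_const.min h1
    exact continuousAt_const.add (h2.smul ((continuous_id.sub continuous_const).continuousAt))

def Om (N : ℕ) (z₀ : ℂ) (W₀ : Fin N → ℂ) (a b : ℝ) : Set ((Fin N → ℂ) × ℂ) :=
  {p | (∀ j, p.1 j ∈ ball (W₀ j) b) ∧ p.2 ∈ ball z₀ a}

lemma isOpen_Om (N : ℕ) (z₀ : ℂ) (W₀ : Fin N → ℂ) (a b : ℝ) :
    IsOpen (Om N z₀ W₀ a b) := by
  have h : Om N z₀ W₀ a b = (univ.pi fun j => ball (W₀ j) b) ×ˢ ball z₀ a := by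
    ext p; simp [Om, Set.mem_pi]
  rw [h]
  exact (isOpen_set_pi finite_univ fun j _ => isOpen_ball).prod isOpen_ball


structure Setup (N : ℕ) (z₀ : ℂ) (W₀ : Fin N → ℂ) (a b M K : ℝ)
    (F : (Fin N → ℂ) × ℂ → (Fin N → ℂ)) (s : ℝ) : Prop where
  hN : 1 ≤ N
  hM0 : 0 < M
  hK0 : 0 ≤ K
  hF : DifferentiableOn ℂ F (Om N z₀ W₀ a b)
  hMb : ∀ p ∈ Om N z₀ W₀ a b, ‖F p‖ ≤ M
  hKb : ∀ j : Fin N, ∀ p ∈ Om N z₀ W₀ a b, ‖fderiv ℂ F p (Pi.single j 1, 0)‖ ≤ K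
  hs0 : 0 < s
  hsa : s < a
  hsb : M * s < b

structure IsGood (N : ℕ) (z₀ : ℂ) (W₀ : Fin N → ℂ) (M s : ℝ)
    (f : ℂ → Fin N → ℂ) : Prop where
  cont : Continuous f
  bound : ∀ z ∈ closedBall z₀ s, ‖f z - W₀‖ ≤ M * ‖z - z₀‖
  clamp : ∀ z, f (clampC z₀ s z) = f z
  diff : DifferentiableOn ℂ f (ball z₀ s)

variable {N : ℕ} {z₀ : ℂ} {W₀ : Fin N → ℂ} {a b M K s : ℝ}
  {F : (Fin N → ℂ) × ℂ → (Fin N → ℂ)}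

lemma Setup.mem_Om (S : Setup N z₀ W₀ a b M K F s) {f : ℂ → Fin N → ℂ}
    (hf : IsGood N z₀ W₀ M s f) {z : ℂ} (hz : z ∈ closedBall z₀ s) :
    (f z, z) ∈ Om N z₀ W₀ a b := by
  have hzn : ‖z - z₀‖ ≤ s := by simpa [mem_closedBall, dist_eq_norm] using hz
  constructor
  · intro j
    have h1 : ‖f z j - W₀ j‖ ≤ ‖f z - W₀‖ := by
      have := norm_le_pi_norm (f z - W₀) j
      simpa using this
    have h2 : ‖f z - W₀‖ ≤ M * s := by
      calc ‖f z - W₀‖ ≤ M * ‖z - z₀‖ := hf.bound z hz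
      _ ≤ M * s := by nlinarith [S.hM0]
    rw [mem_ball, dist_eq_norm]
    calc ‖f z j - W₀ j‖ ≤ M * s := le_trans h1 h2
    _ < b := S.hsb
  · rw [mem_ball, dist_eq_norm]
    calc ‖z - z₀‖ ≤ s := hzn
    _ < a := S.hsa

/-- Lipschitz estimate for `F` in the `w` variable. -/
lemma Setup.lipF (S : Setup N z₀ W₀ a b M K F s) {z : ℂ} (hz : z ∈ ball z₀ a)
    {w w' : Fin N → ℂ} (hw : ∀ j, w j ∈ ball (W₀ j) b) (hw' : ∀ j, w' j ∈ ball (W₀ j) b) :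
    ‖F (w, z) - F (w', z)‖ ≤ (N * K) * ‖w - w'‖ := by
  set V : Set (Fin N → ℂ) := univ.pi fun j => ball (W₀ j) b with hV
  have hVconv : Convex ℝ V := convex_pi fun j _ => convex_ball _ _
  have hmemOm : ∀ u ∈ V, (u, z) ∈ Om N z₀ W₀ a b := by
    intro u hu
    exact ⟨fun j => hu j (mem_univ j), hz⟩
  have hderiv : ∀ u ∈ V, HasFDerivWithinAt (fun v => F (v, z))
      ((fderiv ℂ F (u, z)).comp (ContinuousLinearMap.inl ℂ (Fin N → ℂ) ℂ)) V u := by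
    intro u hu
    have h1 : HasFDerivAt F (fderiv ℂ F (u, z)) (u, z) :=
      (S.hF.differentiableAt ((isOpen_Om N z₀ W₀ a b).mem_nhds (hmemOm u hu))).hasFDerivAt
    have h2 : HasFDerivAt (fun v : Fin N → ℂ => (v, z))
        (ContinuousLinearMap.inl ℂ (Fin N → ℂ) ℂ) u := hasFDerivAt_prodMk_left u z
    exact (h1.comp u h2).hasFDerivWithinAt
  have hbound : ∀ u ∈ V,
      ‖(fderiv ℂ F (u, z)).comp (ContinuousLinearMap.inl ℂ (Fin N → ℂ) ℂ)‖ ≤ N * K := by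
    intro u hu
    apply ContinuousLinearMap.opNorm_le_bound _ (mul_nonneg (Nat.cast_nonneg N) S.hK0)
    intro v
    have hv : ((v, (0:ℂ)) : (Fin N → ℂ) × ℂ) = ∑ j, ((Pi.single j (v j) : Fin N → ℂ), (0:ℂ)) := by
      have h1 : (∑ j, ((Pi.single j (v j) : Fin N → ℂ), (0:ℂ))).1 = v := by
        rw [Prod.fst_sum]; exact Finset.univ_sum_single v
      have h2 : (∑ j, ((Pi.single j (v j) : Fin N → ℂ), (0:ℂ))).2 = 0 := by
        rw [Prod.snd_sum]; simp
      exact Prod.ext h1.symm h2.symm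
    have h0 : ((fderiv ℂ F (u, z)).comp (ContinuousLinearMap.inl ℂ (Fin N → ℂ) ℂ)) v
        = fderiv ℂ F (u, z) (v, 0) := rfl
    rw [h0, hv, map_sum]
    calc ‖∑ j, fderiv ℂ F (u, z) ((Pi.single j (v j) : Fin N → ℂ), (0:ℂ))‖
        ≤ ∑ j, ‖fderiv ℂ F (u, z) ((Pi.single j (v j) : Fin N → ℂ), (0:ℂ))‖ :=
          norm_sum_le _ _
      _ ≤ ∑ _j : Fin N, K * ‖v‖ := by
          apply Finset.sum_le_sum
          intro j _
          have hsingle : ((Pi.single j (v j) : Fin N → ℂ), (0:ℂ))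
              = v j • ((Pi.single j 1 : Fin N → ℂ), (0:ℂ)) := by
            have hfst : (Pi.single j (v j) : Fin N → ℂ) = v j • (Pi.single j 1 : Fin N → ℂ) := by
              ext i
              rcases eq_or_ne i j with rfl | h
              · simp
              · simp [Pi.single_apply, h]
            have hsnd : (0:ℂ) = v j • (0:ℂ) := by simp
            exact Prod.ext hfst hsnd
          rw [hsingle, (fderiv ℂ F (u, z)).map_smul, norm_smul]
          calc ‖v j‖ * ‖fderiv ℂ F (u, z) ((Pi.single j 1 : Fin N → ℂ), (0:ℂ))‖
              ≤ ‖v‖ * K := by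
                apply mul_le_mul ?h1 (S.hKb j _ (hmemOm u hu)) (norm_nonneg _) (norm_nonneg _)
                have := norm_le_pi_norm v j
                simpa using this
            _ = K * ‖v‖ := mul_comm _ _
      _ = (N * K) * ‖v‖ := by
          rw [Finset.sum_const, Finset.card_univ, Fintype.card_fin, nsmul_eq_mul]
          ring
  have hwV : w ∈ V := by intro j _; exact hw j
  have hw'V : w' ∈ V := by intro j _; exact hw' j
  exact Convex.norm_image_sub_le_of_norm_hasFDerivWithin_le hderiv hbound hVconv hw'V hwV


lemma Setup.contG (S : Setup N z₀ W₀ a b M K F s) {f : ℂ → Fin N → ℂ}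
    (hf : IsGood N z₀ W₀ M s f) :
    ContinuousOn (fun ζ : ℂ => F (f ζ, ζ)) (closedBall z₀ s) := by
  apply S.hF.continuousOn.comp ((hf.cont.prodMk continuous_id).continuousOn)
  intro ζ hζ
  exact S.mem_Om hf hζ

lemma Setup.diffG (S : Setup N z₀ W₀ a b M K F s) {f : ℂ → Fin N → ℂ}
    (hf : IsGood N z₀ W₀ M s f) :
    DifferentiableOn ℂ (fun ζ : ℂ => F (f ζ, ζ)) (ball z₀ s) := by
  intro ζ hζ
  have hin : (f ζ, ζ) ∈ Om N z₀ W₀ a b := S.mem_Om hf (ball_subset_closedBall hζ)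
  have h1 : DifferentiableAt ℂ F (f ζ, ζ) :=
    S.hF.differentiableAt ((isOpen_Om N z₀ W₀ a b).mem_nhds hin)
  have h2 : DifferentiableAt ℂ f ζ := hf.diff.differentiableAt (isOpen_ball.mem_nhds hζ)
  have h3 : DifferentiableAt ℂ (fun ζ : ℂ => (f ζ, ζ)) ζ := h2.prodMk differentiableAt_id
  have h4 : DifferentiableAt ℂ (F ∘ fun ζ : ℂ => (f ζ, ζ)) ζ :=
    DifferentiableAt.comp (g := F) (f := fun ζ : ℂ => (f ζ, ζ)) ζ h1 h3
  exact h4.differentiableWithinAt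

/-- The Picard integral operator (with clamping so that it is defined on all of `ℂ`). -/
noncomputable def Phi (N : ℕ) (z₀ : ℂ) (W₀ : Fin N → ℂ)
    (F : (Fin N → ℂ) × ℂ → (Fin N → ℂ)) (s : ℝ) (f : ℂ → Fin N → ℂ) (z : ℂ) : Fin N → ℂ :=
  W₀ + ∫ t in (0:ℝ)..1, (clampC z₀ s z - z₀) •
    F (f (z₀ + t • (clampC z₀ s z - z₀)), z₀ + t • (clampC z₀ s z - z₀))

lemma Setup.hasDerivAt_Phi (S : Setup N z₀ W₀ a b M K F s) {f : ℂ → Fin N → ℂ}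
    (hf : IsGood N z₀ W₀ M s f) {z : ℂ} (hz : z ∈ ball z₀ s) :
    HasDerivAt (Phi N z₀ W₀ F s f) (F (f z, z)) z := by
  set g : ℂ → Fin N → ℂ := fun ζ => F (f ζ, ζ) with hgdef
  have hgc : ContinuousOn g (closedBall z₀ s) := S.contG hf
  have hgd : DifferentiableOn ℂ g (ball z₀ s) := S.diffG hf
  have hgdc : ContinuousOn (deriv g) (ball z₀ s) :=
    ((hgd.analyticOnNhd isOpen_ball).deriv).continuousOn
  have hds : dist z z₀ < s := by simpa [mem_ball] using hz
  have hd0 : (0:ℝ) ≤ dist z z₀ := dist_nonneg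
  set ρ : ℝ := (s - dist z z₀) / 2 with hρdef
  have hρ0 : 0 < ρ := by rw [hρdef]; linarith
  set r' : ℝ := (s + dist z z₀) / 2 with hr'def
  have hr's : r' < s := by rw [hr'def]; linarith
  have hr'0 : 0 ≤ r' := by rw [hr'def]; linarith [S.hs0]
  have hsub : closedBall z₀ r' ⊆ ball z₀ s := closedBall_subset_ball hr's
  -- segment points stay in `closedBall z₀ r'`
  have hseg : ∀ x ∈ closedBall z ρ, ∀ t ∈ Set.Icc (0:ℝ) 1,
      z₀ + t • (x - z₀) ∈ closedBall z₀ r' := by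
    intro x hx t ht
    have hx' : ‖x - z₀‖ ≤ r' := by
      have h1 : dist x z₀ ≤ dist x z + dist z z₀ := dist_triangle x z z₀
      have h2 : dist x z ≤ ρ := by simpa [mem_closedBall] using hx
      rw [← dist_eq_norm]
      rw [hρdef] at h2; rw [hr'def]; linarith
    have : ‖z₀ + t • (x - z₀) - z₀‖ = |t| * ‖x - z₀‖ := by
      rw [add_sub_cancel_left, norm_smul, Real.norm_eq_abs]
    rw [mem_closedBall, dist_eq_norm, this]
    have ht1 : |t| ≤ 1 := by rw [abs_of_nonneg ht.1]; exact ht.2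
    calc |t| * ‖x - z₀‖ ≤ 1 * r' :=
          mul_le_mul ht1 hx' (norm_nonneg _) zero_le_one
    _ = r' := one_mul r'
  -- uniform bounds for `g` and `deriv g` on `closedBall z₀ r'`
  obtain ⟨C₁, hC₁⟩ := (isCompact_closedBall z₀ r').exists_bound_of_continuousOn
    (hgc.mono (hsub.trans ball_subset_closedBall))
  obtain ⟨C₂, hC₂⟩ := (isCompact_closedBall z₀ r').exists_bound_of_continuousOn
    (hgdc.mono hsub)
  have hC₁0 : 0 ≤ C₁ := le_trans (norm_nonneg _) (hC₁ z₀ (mem_closedBall_self hr'0))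
  have hC₂0 : 0 ≤ C₂ := le_trans (norm_nonneg _) (hC₂ z₀ (mem_closedBall_self hr'0))
  set H : ℂ → ℝ → (Fin N → ℂ) := fun x t => (x - z₀) • g (z₀ + t • (x - z₀)) with hHdef
  set H' : ℂ → ℝ → (Fin N → ℂ) := fun x t =>
    g (z₀ + t • (x - z₀)) + (x - z₀) • ((t:ℂ) • deriv g (z₀ + t • (x - z₀))) with hH'def
  -- continuity in `t`
  have hpath : ∀ x : ℂ, Continuous (fun t : ℝ => z₀ + t • (x - z₀)) :=
    fun x => continuous_const.add (continuous_id.smul continuous_const)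
  have hHcont : ∀ x ∈ closedBall z ρ, ContinuousOn (fun t => H x t) (Set.Icc (0:ℝ) 1) := by
    intro x hx
    apply ContinuousOn.fun_smul continuousOn_const
    apply (hgc.mono (hsub.trans ball_subset_closedBall)).comp (hpath x).continuousOn
    intro t ht
    exact hseg x hx t ht
  have hzρ : z ∈ closedBall z ρ := mem_closedBall_self hρ0.le
  have hH'cont : ContinuousOn (fun t => H' z t) (Set.Icc (0:ℝ) 1) := by
    apply ContinuousOn.add
    · apply (hgc.mono (hsub.trans ball_subset_closedBall)).comp (hpath z).continuousOn
      intro t ht; exact hseg z hzρ t ht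
    · apply ContinuousOn.fun_smul continuousOn_const
      apply ContinuousOn.fun_smul (Complex.continuous_ofReal.continuousOn)
      apply (hgdc.mono hsub).comp (hpath z).continuousOn
      intro t ht; exact hseg z hzρ t ht
  -- differentiating the integrand
  have hHderiv : ∀ t ∈ Set.Icc (0:ℝ) 1, ∀ x ∈ ball z ρ,
      HasDerivAt (fun y => H y t) (H' x t) x := by
    intro t ht x hx
    have hpt : z₀ + t • (x - z₀) ∈ ball z₀ s :=
      hsub (hseg x (ball_subset_closedBall hx) t ht)
    have h_g : HasDerivAt g (deriv g (z₀ + t • (x - z₀))) (z₀ + t • (x - z₀)) :=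
      (hgd.differentiableAt (isOpen_ball.mem_nhds hpt)).hasDerivAt
    have h_inner : HasDerivAt (fun y : ℂ => z₀ + t • (y - z₀)) ((t:ℂ)) x := by
      have heq : (fun y : ℂ => z₀ + t • (y - z₀)) = fun y => z₀ + (t:ℂ) * (y - z₀) := by
        funext y; rw [Complex.real_smul]
      rw [heq]
      simpa using (((hasDerivAt_id x).sub_const z₀).const_mul (t:ℂ)).const_add z₀
    have h_comp : HasDerivAt (fun y : ℂ => g (z₀ + t • (y - z₀)))
        ((t:ℂ) • deriv g (z₀ + t • (x - z₀))) x := by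
      have := h_g.scomp x h_inner; exact this
    have h_c : HasDerivAt (fun y : ℂ => y - z₀) 1 x := (hasDerivAt_id x).sub_const z₀
    have h_prod := h_c.fun_smul h_comp
    have e : H' x t = (x - z₀) • (t:ℂ) • deriv g (z₀ + t • (x - z₀))
        + (1:ℂ) • g (z₀ + t • (x - z₀)) := by
      rw [hH'def, one_smul]; exact add_comm _ _
    rw [e]; exact h_prod
  -- the bound
  have hbound : ∀ t ∈ Set.Icc (0:ℝ) 1, ∀ x ∈ ball z ρ, ‖H' x t‖ ≤ C₁ + s * C₂ := by
    intro t ht x hx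
    have hpt : z₀ + t • (x - z₀) ∈ closedBall z₀ r' :=
      hseg x (ball_subset_closedBall hx) t ht
    have h1 : ‖g (z₀ + t • (x - z₀))‖ ≤ C₁ := hC₁ _ hpt
    have h2 : ‖deriv g (z₀ + t • (x - z₀))‖ ≤ C₂ := hC₂ _ hpt
    have hx' : ‖x - z₀‖ ≤ r' := by
      have ha1 : dist x z₀ ≤ dist x z + dist z z₀ := dist_triangle x z z₀
      have ha2 : dist x z ≤ ρ := le_of_lt (by simpa [mem_ball] using hx)
      rw [← dist_eq_norm]; rw [hρdef] at ha2; rw [hr'def]; linarith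
    have ht1 : |t| ≤ 1 := by rw [abs_of_nonneg ht.1]; exact ht.2
    have h3 : ‖(x - z₀) • ((t:ℂ) • deriv g (z₀ + t • (x - z₀)))‖ ≤ s * C₂ := by
      rw [norm_smul, norm_smul, Complex.norm_real, Real.norm_eq_abs]
      calc ‖x - z₀‖ * (|t| * ‖deriv g (z₀ + t • (x - z₀))‖) ≤ r' * (1 * C₂) := by
            apply mul_le_mul hx' _ (by positivity) hr'0
            exact mul_le_mul ht1 h2 (norm_nonneg _) zero_le_one
      _ ≤ s * C₂ := by nlinarith
    calc ‖H' x t‖ ≤ ‖g (z₀ + t • (x - z₀))‖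
          + ‖(x - z₀) • ((t:ℂ) • deriv g (z₀ + t • (x - z₀)))‖ := norm_add_le _ _
    _ ≤ C₁ + s * C₂ := add_le_add h1 h3
  have huIoc : Ι (0:ℝ) 1 = Set.Ioc (0:ℝ) 1 := uIoc_of_le zero_le_one
  -- apply differentiation under the integral sign
  have key := intervalIntegral.hasDerivAt_integral_of_dominated_loc_of_deriv_le
    (F := H) (F' := H') (x₀ := z) (a := (0:ℝ)) (b := 1) (μ := volume)
    (bound := fun _ => C₁ + s * C₂) (s := ball z ρ) (ball_mem_nhds z hρ0)
    (by
      filter_upwards [closedBall_mem_nhds z hρ0] with x hx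
      rw [huIoc]
      exact ((hHcont x hx).mono Set.Ioc_subset_Icc_self).aestronglyMeasurable
        measurableSet_Ioc)
    (by
      apply ContinuousOn.intervalIntegrable
      rw [Set.uIcc_of_le (zero_le_one : (0:ℝ) ≤ 1)]
      exact hHcont z hzρ)
    (by
      rw [huIoc]
      exact (hH'cont.mono Set.Ioc_subset_Icc_self).aestronglyMeasurable measurableSet_Ioc)
    (by
      apply Filter.Eventually.of_forall
      intro t ht x hx
      exact hbound t (Set.Ioc_subset_Icc_self (huIoc ▸ ht)) x hx)
    intervalIntegrable_const
    (by
      apply Filter.Eventually.of_forall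
      intro t ht x hx
      exact hHderiv t (Set.Ioc_subset_Icc_self (huIoc ▸ ht)) x hx)
  have hDI : HasDerivAt (fun x => ∫ t in (0:ℝ)..1, H x t) (∫ t in (0:ℝ)..1, H' z t) z :=
    key.2
  -- FTC in `t` computes the integral of `H' z`
  have hcoe : ∀ (t : ℝ) (v : Fin N → ℂ), (t:ℂ) • v = t • v := by
    intro t v
    rw [show ((t:ℝ):ℂ) = t • (1:ℂ) by rw [Complex.real_smul, mul_one], smul_assoc, one_smul]
  have hFTC : ∫ t in (0:ℝ)..1, H' z t = g z := by
    have hq : ∀ t ∈ Set.uIcc (0:ℝ) 1,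
        HasDerivAt (fun u : ℝ => u • g (z₀ + u • (z - z₀))) (H' z t) t := by
      intro t ht
      rw [Set.uIcc_of_le zero_le_one] at ht
      have hpt : z₀ + t • (z - z₀) ∈ ball z₀ s := hsub (hseg z hzρ t ht)
      have h_g : HasDerivAt g (deriv g (z₀ + t • (z - z₀))) (z₀ + t • (z - z₀)) :=
        (hgd.differentiableAt (isOpen_ball.mem_nhds hpt)).hasDerivAt
      have h_inner : HasDerivAt (fun u : ℝ => z₀ + u • (z - z₀)) (z - z₀) t := by
        simpa using ((hasDerivAt_id t).smul_const (z - z₀)).const_add z₀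
      have h_comp : HasDerivAt (fun u : ℝ => g (z₀ + u • (z - z₀)))
          ((z - z₀) • deriv g (z₀ + t • (z - z₀))) t := by
        have := h_g.scomp t h_inner; exact this
      have h_prod := (hasDerivAt_id t).smul h_comp
      have heq : id t • (z - z₀) • deriv g (z₀ + t • (z - z₀))
          + (1:ℝ) • g (z₀ + t • (z - z₀)) = H' z t := by
        show t • (z - z₀) • deriv g (z₀ + t • (z - z₀))
            + (1:ℝ) • g (z₀ + t • (z - z₀))
            = g (z₀ + t • (z - z₀)) + (z - z₀) • (t:ℂ) • deriv g (z₀ + t • (z - z₀))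
        rw [smul_comm t (z - z₀), hcoe t, one_smul]
        exact add_comm _ _
      rw [heq] at h_prod
      exact h_prod
    have hint' : IntervalIntegrable (fun t => H' z t) volume 0 1 := by
      apply ContinuousOn.intervalIntegrable
      rw [Set.uIcc_of_le (zero_le_one : (0:ℝ) ≤ 1)]
      exact hH'cont
    have := intervalIntegral.integral_eq_sub_of_hasDerivAt hq hint'
    rw [this]
    norm_num
  rw [hFTC] at hDI
  -- `Phi` agrees with the unclamped integral near `z`
  have hev : (fun x => W₀ + ∫ t in (0:ℝ)..1, H x t) =ᶠ[nhds z] Phi N z₀ W₀ F s f := by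
    filter_upwards [isOpen_ball.mem_nhds hz] with x hx
    have hcl : clampC z₀ s x = x := clampC_of_mem (ball_subset_closedBall hx)
    rw [Phi, hcl]
  exact (hDI.const_add W₀).congr_of_eventuallyEq hev.symm


lemma seg_mem_closedBall {z₀ w : ℂ} {s : ℝ} (hw : w ∈ closedBall z₀ s)
    {t : ℝ} (h0 : 0 ≤ t) (h1 : t ≤ 1) : z₀ + t • (w - z₀) ∈ closedBall z₀ s := by
  have hw' : ‖w - z₀‖ ≤ s := by simpa [mem_closedBall, dist_eq_norm] using hw
  have hs0 : 0 ≤ s := le_trans (norm_nonneg _) hw'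
  rw [mem_closedBall, dist_eq_norm, add_sub_cancel_left, norm_smul, Real.norm_eq_abs,
    abs_of_nonneg h0]
  calc t * ‖w - z₀‖ ≤ 1 * s := mul_le_mul h1 hw' (norm_nonneg _) zero_le_one
  _ = s := one_mul s

/-- Pointwise bound for the integral operator. -/
lemma Setup.Phi_sub_bound (S : Setup N z₀ W₀ a b M K F s) {f : ℂ → Fin N → ℂ}
    (hf : IsGood N z₀ W₀ M s f) (z : ℂ) :
    ‖Phi N z₀ W₀ F s f z - W₀‖ ≤ M * ‖clampC z₀ s z - z₀‖ := by
  have hcl : clampC z₀ s z ∈ closedBall z₀ s := clampC_mem z₀ S.hs0.le z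
  have h0 : Phi N z₀ W₀ F s f z - W₀ = ∫ t in (0:ℝ)..1, (clampC z₀ s z - z₀) •
      F (f (z₀ + t • (clampC z₀ s z - z₀)), z₀ + t • (clampC z₀ s z - z₀)) := by
    rw [Phi]; ring_nf
  rw [h0]
  have hb : ∀ t ∈ Ι (0:ℝ) 1, ‖(clampC z₀ s z - z₀) •
      F (f (z₀ + t • (clampC z₀ s z - z₀)), z₀ + t • (clampC z₀ s z - z₀))‖
      ≤ ‖clampC z₀ s z - z₀‖ * M := by
    intro t ht
    rw [uIoc_of_le (zero_le_one : (0:ℝ) ≤ 1)] at ht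
    have hpt : z₀ + t • (clampC z₀ s z - z₀) ∈ closedBall z₀ s :=
      seg_mem_closedBall hcl ht.1.le ht.2
    rw [norm_smul]
    apply mul_le_mul_of_nonneg_left _ (norm_nonneg _)
    exact S.hMb _ (S.mem_Om hf hpt)
  calc ‖∫ t in (0:ℝ)..1, (clampC z₀ s z - z₀) •
        F (f (z₀ + t • (clampC z₀ s z - z₀)), z₀ + t • (clampC z₀ s z - z₀))‖
      ≤ (‖clampC z₀ s z - z₀‖ * M) * |1 - 0| :=
        intervalIntegral.norm_integral_le_of_norm_le_const hb
  _ = M * ‖clampC z₀ s z - z₀‖ := by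
        rw [show |(1:ℝ) - 0| = 1 by norm_num, mul_one, mul_comm]

lemma Setup.Phi_clamp (S : Setup N z₀ W₀ a b M K F s) (f : ℂ → Fin N → ℂ) (z : ℂ) :
    Phi N z₀ W₀ F s f (clampC z₀ s z) = Phi N z₀ W₀ F s f z := by
  unfold Phi
  rw [clampC_idem z₀ S.hs0.le z]

lemma Setup.good_Phi (S : Setup N z₀ W₀ a b M K F s) {f : ℂ → Fin N → ℂ}
    (hf : IsGood N z₀ W₀ M s f) : IsGood N z₀ W₀ M s (Phi N z₀ W₀ F s f) := by
  constructor
  · -- continuity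
    set tc : ℝ → ℝ := fun t => max 0 (min 1 t) with htc
    have htc_cont : Continuous tc := continuous_const.max (continuous_const.min continuous_id)
    have htc_mem : ∀ t, tc t ∈ Set.Icc (0:ℝ) 1 :=
      fun t => ⟨le_max_left _ _, max_le zero_le_one (min_le_left _ _)⟩
    have heq : Phi N z₀ W₀ F s f = fun z => W₀ + ∫ t in (0:ℝ)..1,
        (clampC z₀ s z - z₀) • F (f (z₀ + tc t • (clampC z₀ s z - z₀)),
          z₀ + tc t • (clampC z₀ s z - z₀)) := by
      funext z
      rw [Phi]
      congr 1
      apply intervalIntegral.integral_congr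
      intro t ht
      rw [Set.uIcc_of_le (zero_le_one : (0:ℝ) ≤ 1)] at ht
      have htt : tc t = t := by
        rw [htc]; simp only [min_eq_right ht.2, max_eq_right ht.1]
      simp only [htt]
    rw [heq]
    apply continuous_const.add
    apply continuous_parametric_intervalIntegral_of_continuous'
    · -- joint continuity
      have hm : Continuous (fun p : ℂ × ℝ => z₀ + tc p.2 • (clampC z₀ s p.1 - z₀)) := by
        apply continuous_const.add
        exact ((htc_cont.comp continuous_snd).smul
          (((continuous_clampC z₀ S.hs0).comp continuous_fst).sub continuous_const))
      have hmem : ∀ p : ℂ × ℝ, z₀ + tc p.2 • (clampC z₀ s p.1 - z₀) ∈ closedBall z₀ s := by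
        intro p
        exact seg_mem_closedBall (clampC_mem z₀ S.hs0.le p.1) (htc_mem p.2).1 (htc_mem p.2).2
      have hG : Continuous (fun p : ℂ × ℝ =>
          F (f (z₀ + tc p.2 • (clampC z₀ s p.1 - z₀)), z₀ + tc p.2 • (clampC z₀ s p.1 - z₀))) :=
        (S.contG hf).comp_continuous hm hmem
      exact (((continuous_clampC z₀ S.hs0).comp continuous_fst).sub continuous_const).smul hG
  · -- bound
    intro z hz
    have := S.Phi_sub_bound hf z
    rwa [clampC_of_mem hz] at this
  · -- clamp invariance
    exact S.Phi_clamp f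
  · -- differentiability
    intro z hz
    exact ((S.hasDerivAt_Phi hf hz).differentiableAt).differentiableWithinAt


lemma Setup.good_const (S : Setup N z₀ W₀ a b M K F s) :
    IsGood N z₀ W₀ M s (fun _ => W₀) := by
  refine ⟨continuous_const, ?_, fun z => rfl, differentiableOn_const _⟩
  intro z hz
  simp only [sub_self, norm_zero]
  have := S.hM0
  positivity

lemma Setup.Phi_contract (S : Setup N z₀ W₀ a b M K F s) {f g : ℂ → Fin N → ℂ}
    (hf : IsGood N z₀ W₀ M s f) (hg : IsGood N z₀ W₀ M s g) {c : ℝ} (hc : 0 ≤ c) {k : ℕ}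
    (hfg : ∀ z ∈ closedBall z₀ s, ‖f z - g z‖ ≤ c * ‖z - z₀‖ ^ k) :
    ∀ z ∈ closedBall z₀ s, ‖Phi N z₀ W₀ F s f z - Phi N z₀ W₀ F s g z‖
      ≤ (N * K) * c / (k + 1) * ‖z - z₀‖ ^ (k + 1) := by
  intro z hz
  have hcl : clampC z₀ s z = z := clampC_of_mem hz
  have hzs : ‖z - z₀‖ ≤ s := by simpa [mem_closedBall, dist_eq_norm] using hz
  set G₁ : ℝ → (Fin N → ℂ) := fun t =>
    (z - z₀) • F (f (z₀ + t • (z - z₀)), z₀ + t • (z - z₀)) with hG₁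
  set G₂ : ℝ → (Fin N → ℂ) := fun t =>
    (z - z₀) • F (g (z₀ + t • (z - z₀)), z₀ + t • (z - z₀)) with hG₂
  have hpathc : Continuous (fun t : ℝ => z₀ + t • (z - z₀)) :=
    continuous_const.add (continuous_id.smul continuous_const)
  have hmemIcc : ∀ t ∈ Set.uIcc (0:ℝ) 1, z₀ + t • (z - z₀) ∈ closedBall z₀ s := by
    intro t ht
    rw [Set.uIcc_of_le (zero_le_one : (0:ℝ) ≤ 1)] at ht
    exact seg_mem_closedBall hz ht.1 ht.2
  have hint1 : IntervalIntegrable G₁ volume 0 1 := by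
    apply ContinuousOn.intervalIntegrable
    exact continuousOn_const.fun_smul (((S.contG hf).comp hpathc.continuousOn) hmemIcc)
  have hint2 : IntervalIntegrable G₂ volume 0 1 := by
    apply ContinuousOn.intervalIntegrable
    exact continuousOn_const.fun_smul (((S.contG hg).comp hpathc.continuousOn) hmemIcc)
  have hdiff : Phi N z₀ W₀ F s f z - Phi N z₀ W₀ F s g z = ∫ t in (0:ℝ)..1, (G₁ t - G₂ t) := by
    rw [intervalIntegral.integral_sub hint1 hint2]
    rw [Phi, Phi, hcl]
    abel
  rw [hdiff]
  set bnd : ℝ → ℝ := fun t => (‖z - z₀‖ * ((N * K) * c * ‖z - z₀‖ ^ k)) * t ^ k with hbnd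
  have hbint : IntervalIntegrable bnd volume 0 1 := by
    apply Continuous.intervalIntegrable
    rw [hbnd]
    fun_prop
  have hptbound : ∀ t ∈ Ι (0:ℝ) 1, ‖G₁ t - G₂ t‖ ≤ bnd t := by
    intro t ht
    rw [uIoc_of_le (zero_le_one : (0:ℝ) ≤ 1)] at ht
    have ht' : t ∈ Set.Icc (0:ℝ) 1 := ⟨ht.1.le, ht.2⟩
    have hγ : z₀ + t • (z - z₀) ∈ closedBall z₀ s := seg_mem_closedBall hz ht'.1 ht'.2
    have hγa : z₀ + t • (z - z₀) ∈ ball z₀ a := by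
      rw [mem_ball]
      calc dist (z₀ + t • (z - z₀)) z₀ ≤ s := by simpa [mem_closedBall] using hγ
      _ < a := S.hsa
    have hsub : G₁ t - G₂ t = (z - z₀) • (F (f (z₀ + t • (z - z₀)), z₀ + t • (z - z₀))
        - F (g (z₀ + t • (z - z₀)), z₀ + t • (z - z₀))) := by
      rw [smul_sub]
    rw [hsub, norm_smul]
    have hlip := S.lipF hγa (fun j => (S.mem_Om hf hγ).1 j) (fun j => (S.mem_Om hg hγ).1 j)
    have hval : ‖f (z₀ + t • (z - z₀)) - g (z₀ + t • (z - z₀))‖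
        ≤ c * (t * ‖z - z₀‖) ^ k := by
      have h1 := hfg _ hγ
      rwa [add_sub_cancel_left, norm_smul, Real.norm_eq_abs, abs_of_nonneg ht.1.le] at h1
    calc ‖z - z₀‖ * ‖F (f (z₀ + t • (z - z₀)), z₀ + t • (z - z₀))
          - F (g (z₀ + t • (z - z₀)), z₀ + t • (z - z₀))‖
        ≤ ‖z - z₀‖ * ((N * K) * (c * (t * ‖z - z₀‖) ^ k)) := by
          apply mul_le_mul_of_nonneg_left _ (norm_nonneg _)
          calc ‖F (f (z₀ + t • (z - z₀)), z₀ + t • (z - z₀))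
                - F (g (z₀ + t • (z - z₀)), z₀ + t • (z - z₀))‖
              ≤ (N * K) * ‖f (z₀ + t • (z - z₀)) - g (z₀ + t • (z - z₀))‖ := hlip
          _ ≤ (N * K) * (c * (t * ‖z - z₀‖) ^ k) := by
              apply mul_le_mul_of_nonneg_left hval
              exact mul_nonneg (Nat.cast_nonneg N) S.hK0
    _ = bnd t := by rw [hbnd]; ring
  have hIbnd : ∫ t in (0:ℝ)..1, bnd t
      = (‖z - z₀‖ * ((N * K) * c * ‖z - z₀‖ ^ k)) * (1 / (k + 1)) := by
    rw [hbnd, intervalIntegral.integral_const_mul, integral_pow]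
    norm_num
  have hfinal := intervalIntegral.norm_integral_le_of_norm_le zero_le_one
    (Filter.Eventually.of_forall fun t ht => hptbound t (by rwa [uIoc_of_le zero_le_one]))
    hbint
  rw [hIbnd] at hfinal
  have hnn : (0:ℝ) ≤ (‖z - z₀‖ * ((N * K) * c * ‖z - z₀‖ ^ k)) * (1 / (k + 1)) := by
    have h1 : (0:ℝ) ≤ (N:ℝ) * K := mul_nonneg (Nat.cast_nonneg N) S.hK0
    positivity
  calc ‖∫ t in (0:ℝ)..1, (G₁ t - G₂ t)‖
      ≤ (‖z - z₀‖ * ((N * K) * c * ‖z - z₀‖ ^ k)) * (1 / (k + 1)) := hfinal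
  _ = (N * K) * c / (k + 1) * ‖z - z₀‖ ^ (k + 1) := by
      have hk : ((k:ℝ) + 1) ≠ 0 := by positivity
      field_simp
      ring

lemma Setup.good_iter (S : Setup N z₀ W₀ a b M K F s) {f : ℂ → Fin N → ℂ}
    (hf : IsGood N z₀ W₀ M s f) (k : ℕ) :
    IsGood N z₀ W₀ M s ((Phi N z₀ W₀ F s)^[k] f) := by
  induction k with
  | zero => exact hf
  | succ k ih =>
      rw [Function.iterate_succ_apply']
      exact S.good_Phi ih

lemma Setup.iter_bound (S : Setup N z₀ W₀ a b M K F s) {f g : ℂ → Fin N → ℂ}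
    (hf : IsGood N z₀ W₀ M s f) (hg : IsGood N z₀ W₀ M s g) {D : ℝ} (hD : 0 ≤ D)
    (hfg : ∀ z ∈ closedBall z₀ s, ‖f z - g z‖ ≤ D) (k : ℕ) :
    ∀ z ∈ closedBall z₀ s, ‖(Phi N z₀ W₀ F s)^[k] f z - (Phi N z₀ W₀ F s)^[k] g z‖
      ≤ (N * K) ^ k * D / (k.factorial) * ‖z - z₀‖ ^ k := by
  induction k with
  | zero =>
      intro z hz
      simpa using hfg z hz
  | succ k ih =>
      have hNK : (0:ℝ) ≤ (N:ℝ) * K := mul_nonneg (Nat.cast_nonneg N) S.hK0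
      have hc : (0:ℝ) ≤ (N * K) ^ k * D / (k.factorial) := by positivity
      have hstep := S.Phi_contract (S.good_iter hf k) (S.good_iter hg k) hc ih
      intro z hz
      have h1 := hstep z hz
      rw [Function.iterate_succ_apply', Function.iterate_succ_apply']
      calc ‖Phi N z₀ W₀ F s ((Phi N z₀ W₀ F s)^[k] f) z
            - Phi N z₀ W₀ F s ((Phi N z₀ W₀ F s)^[k] g) z‖
          ≤ (N * K) * ((N * K) ^ k * D / (k.factorial)) / (k + 1) * ‖z - z₀‖ ^ (k + 1) := h1
      _ = (N * K) ^ (k + 1) * D / ((k+1).factorial) * ‖z - z₀‖ ^ (k + 1) := by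
          rw [Nat.factorial_succ]
          push_cast
          have hk : ((k:ℝ) + 1) ≠ 0 := by positivity
          have hkf : ((k.factorial : ℝ)) ≠ 0 := by
            exact_mod_cast Nat.cast_ne_zero.mpr k.factorial_ne_zero
          field_simp
          ring


lemma Setup.fixed_unique (S : Setup N z₀ W₀ a b M K F s) {f g : ℂ → Fin N → ℂ}
    (hf : IsGood N z₀ W₀ M s f) (hg : IsGood N z₀ W₀ M s g)
    (hff : Phi N z₀ W₀ F s f = f) (hgg : Phi N z₀ W₀ F s g = g) :
    ∀ z ∈ closedBall z₀ s, f z = g z := by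
  have hiterf : ∀ k, (Phi N z₀ W₀ F s)^[k] f = f := fun k => Function.IsFixedPt.iterate hff k
  have hiterg : ∀ k, (Phi N z₀ W₀ F s)^[k] g = g := fun k => Function.IsFixedPt.iterate hgg k
  have hMs : (0:ℝ) ≤ M * s := mul_nonneg S.hM0.le S.hs0.le
  have hD : ∀ z ∈ closedBall z₀ s, ‖f z - g z‖ ≤ 2 * (M * s) := by
    intro z hz
    have h1 : ‖f z - W₀‖ ≤ M * s := by
      calc ‖f z - W₀‖ ≤ M * ‖z - z₀‖ := hf.bound z hz
      _ ≤ M * s := mul_le_mul_of_nonneg_left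
          (by simpa [mem_closedBall, dist_eq_norm] using hz) S.hM0.le
    have h2 : ‖g z - W₀‖ ≤ M * s := by
      calc ‖g z - W₀‖ ≤ M * ‖z - z₀‖ := hg.bound z hz
      _ ≤ M * s := mul_le_mul_of_nonneg_left
          (by simpa [mem_closedBall, dist_eq_norm] using hz) S.hM0.le
    calc ‖f z - g z‖ = ‖(f z - W₀) - (g z - W₀)‖ := by abel_nf
    _ ≤ ‖f z - W₀‖ + ‖g z - W₀‖ := norm_sub_le _ _
    _ ≤ 2 * (M * s) := by linarith
  have hNK : (0:ℝ) ≤ (N:ℝ) * K := mul_nonneg (Nat.cast_nonneg N) S.hK0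
  intro z hz
  have hzs : ‖z - z₀‖ ≤ s := by simpa [mem_closedBall, dist_eq_norm] using hz
  have hk : ∀ k, ‖f z - g z‖ ≤ ((N:ℝ) * K * s) ^ k / (k.factorial) * (2 * (M * s)) := by
    intro k
    have h1 := S.iter_bound hf hg (by positivity) hD k z hz
    rw [hiterf k, hiterg k] at h1
    calc ‖f z - g z‖ ≤ (N * K) ^ k * (2 * (M * s)) / (k.factorial) * ‖z - z₀‖ ^ k := h1
    _ ≤ (N * K) ^ k * (2 * (M * s)) / (k.factorial) * s ^ k := by
        apply mul_le_mul_of_nonneg_left (pow_le_pow_left₀ (norm_nonneg _) hzs k)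
        positivity
    _ = ((N:ℝ) * K * s) ^ k / (k.factorial) * (2 * (M * s)) := by
        rw [mul_pow]
        ring
  have h0 : Filter.Tendsto (fun k : ℕ => ((N:ℝ) * K * s) ^ k / (k.factorial) * (2 * (M * s)))
      atTop (nhds 0) := by
    have := (FloorSemiring.tendsto_pow_div_factorial_atTop ((N:ℝ) * K * s)).mul_const
      (2 * (M * s))
    simpa using this
  have hle : ‖f z - g z‖ ≤ 0 := ge_of_tendsto h0 (Filter.Eventually.of_forall hk)
  have := norm_le_zero_iff.mp hle
  exact sub_eq_zero.mp this

lemma Setup.exists_fixed (S : Setup N z₀ W₀ a b M K F s) :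
    ∃ W : ℂ → Fin N → ℂ, IsGood N z₀ W₀ M s W ∧ Phi N z₀ W₀ F s W = W := by
  classical
  set Φ := Phi N z₀ W₀ F s with hΦ
  set f0 : ℂ → Fin N → ℂ := fun _ => W₀ with hf0
  have hgood : ∀ k, IsGood N z₀ W₀ M s (Φ^[k] f0) := S.good_iter S.good_const
  have hMs : (0:ℝ) ≤ M * s := mul_nonneg S.hM0.le S.hs0.le
  have hNK : (0:ℝ) ≤ (N:ℝ) * K := mul_nonneg (Nat.cast_nonneg N) S.hK0
  have hubound : ∀ k z, ‖Φ^[k] f0 z‖ ≤ ‖W₀‖ + M * s := by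
    intro k z
    have h1 := (hgood k).bound (clampC z₀ s z) (clampC_mem z₀ S.hs0.le z)
    rw [(hgood k).clamp z] at h1
    have h2 : M * ‖clampC z₀ s z - z₀‖ ≤ M * s :=
      mul_le_mul_of_nonneg_left (clampC_norm_le z₀ S.hs0.le z) S.hM0.le
    calc ‖Φ^[k] f0 z‖ = ‖Φ^[k] f0 z - W₀ + W₀‖ := by rw [sub_add_cancel]
    _ ≤ ‖Φ^[k] f0 z - W₀‖ + ‖W₀‖ := norm_add_le _ _
    _ ≤ ‖W₀‖ + M * s := by linarith
  set G : ℕ → BoundedContinuousFunction ℂ (Fin N → ℂ) := fun k =>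
    BoundedContinuousFunction.ofNormedAddCommGroup (Φ^[k] f0) (hgood k).cont
      (‖W₀‖ + M * s) (hubound k) with hG
  have hGz : ∀ k z, G k z = Φ^[k] f0 z := fun k z => rfl
  -- distance between consecutive iterates
  have hd01 : ∀ z ∈ closedBall z₀ s, ‖f0 z - Φ f0 z‖ ≤ M * s := by
    intro z hz
    have h1 := S.Phi_sub_bound S.good_const z
    rw [clampC_of_mem hz] at h1
    calc ‖f0 z - Φ f0 z‖ = ‖Φ f0 z - W₀‖ := by rw [norm_sub_rev]
    _ ≤ M * ‖z - z₀‖ := h1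
    _ ≤ M * s := mul_le_mul_of_nonneg_left
        (by simpa [mem_closedBall, dist_eq_norm] using hz) S.hM0.le
  have hdist : ∀ k, dist (G k) (G (k + 1)) ≤ (N * K) ^ k * (M * s) / (k.factorial) * s ^ k := by
    intro k
    apply BoundedContinuousFunction.dist_le
      (mul_nonneg (div_nonneg (mul_nonneg (pow_nonneg hNK k) hMs) (by positivity))
        (pow_nonneg S.hs0.le k)) |>.mpr
    intro z
    rw [dist_eq_norm]
    have hb := S.iter_bound S.good_const (S.good_Phi S.good_const) hMs hd01 k
      (clampC z₀ s z) (clampC_mem z₀ S.hs0.le z)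
    have hcl1 : Φ^[k] f0 (clampC z₀ s z) = Φ^[k] f0 z := (hgood k).clamp z
    have hcl2 : Φ^[k] (Φ f0) (clampC z₀ s z) = Φ^[k] (Φ f0) z := by
      have := (S.good_iter (S.good_Phi S.good_const) k).clamp z
      exact this
    rw [hcl1, hcl2] at hb
    have hGk1 : G (k+1) z = Φ^[k] (Φ f0) z := by
      rw [hGz, Function.iterate_succ_apply]
    rw [hGz, hGk1]
    calc ‖Φ^[k] f0 z - Φ^[k] (Φ f0) z‖
        ≤ (N * K) ^ k * (M * s) / (k.factorial) * ‖clampC z₀ s z - z₀‖ ^ k := hb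
    _ ≤ (N * K) ^ k * (M * s) / (k.factorial) * s ^ k := by
        apply mul_le_mul_of_nonneg_left
          (pow_le_pow_left₀ (norm_nonneg _) (clampC_norm_le z₀ S.hs0.le z) k)
        positivity
  have hsum : Summable (fun k : ℕ => (N * K) ^ k * (M * s) / (k.factorial) * s ^ k) := by
    apply Summable.congr ((Real.summable_pow_div_factorial ((N:ℝ) * K * s)).mul_right (M * s))
    intro k
    rw [mul_pow, mul_pow]
    ring
  have hcauchy : CauchySeq G := cauchySeq_of_dist_le_of_summable _ hdist hsum
  obtain ⟨W, hWlim⟩ := cauchySeq_tendsto_of_complete hcauchy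
  have heval : ∀ z, Filter.Tendsto (fun k => Φ^[k] f0 z) atTop (nhds (W z)) := by
    intro z
    exact ((continuous_eval_const (F := BoundedContinuousFunction ℂ (Fin N → ℂ))
      z).tendsto W).comp hWlim
  have hdist0 : Filter.Tendsto (fun k => dist (G k) W) atTop (nhds 0) :=
    tendsto_iff_dist_tendsto_zero.mp hWlim
  -- the limit is good
  have hWgood : IsGood N z₀ W₀ M s (⇑W) := by
    constructor
    · exact W.continuous
    · intro z hz
      have htend : Filter.Tendsto (fun k => ‖Φ^[k] f0 z - W₀‖) atTop (nhds ‖W z - W₀‖) :=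
        ((heval z).sub tendsto_const_nhds).norm
      exact le_of_tendsto htend (Filter.Eventually.of_forall fun k => (hgood k).bound z hz)
    · intro z
      have h1 := heval (clampC z₀ s z)
      have h2 : (fun k => Φ^[k] f0 (clampC z₀ s z)) = fun k => Φ^[k] f0 z :=
        funext fun k => (hgood k).clamp z
      rw [h2] at h1
      exact tendsto_nhds_unique h1 (heval z)
    · have hunif : TendstoUniformly (fun k => ⇑(G k)) (⇑W) atTop :=
        BoundedContinuousFunction.tendsto_iff_tendstoUniformly.mp hWlim
      have hlocal : TendstoLocallyUniformlyOn (fun k => ⇑(G k)) (⇑W) atTop (ball z₀ s) :=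
        ((tendstoUniformlyOn_univ.2 hunif).mono (subset_univ _)).tendstoLocallyUniformlyOn
      exact hlocal.differentiableOn
        (Filter.Eventually.of_forall fun k => (hgood k).diff) isOpen_ball
  refine ⟨⇑W, hWgood, ?_⟩
  -- fixed point property
  funext z
  have hstep : ∀ k, ‖Φ (Φ^[k] f0) z - Φ (⇑W) z‖ ≤ (N * K) * dist (G k) W * s := by
    intro k
    have hfg : ∀ z' ∈ closedBall z₀ s, ‖Φ^[k] f0 z' - W z'‖ ≤ dist (G k) W * ‖z' - z₀‖ ^ 0 := by
      intro z' _
      rw [pow_zero, mul_one]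
      have := BoundedContinuousFunction.dist_coe_le_dist (f := G k) (g := W) z'
      rw [dist_eq_norm] at this
      exact this
    have hcon := S.Phi_contract (hgood k) hWgood dist_nonneg hfg (clampC z₀ s z)
      (clampC_mem z₀ S.hs0.le z)
    rw [S.Phi_clamp, S.Phi_clamp] at hcon
    norm_num at hcon
    calc ‖Φ (Φ^[k] f0) z - Φ (⇑W) z‖
        ≤ (N * K) * dist (G k) W * ‖clampC z₀ s z - z₀‖ := hcon
    _ ≤ (N * K) * dist (G k) W * s := by
        apply mul_le_mul_of_nonneg_left (clampC_norm_le z₀ S.hs0.le z)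
        positivity
  have htend1 : Filter.Tendsto (fun k => Φ (Φ^[k] f0) z) atTop (nhds (W z)) := by
    have h1 : (fun k => Φ (Φ^[k] f0) z) = fun k => Φ^[k + 1] f0 z := by
      funext k
      rw [Function.iterate_succ_apply']
    rw [h1]
    exact (heval z).comp (Filter.tendsto_add_atTop_nat 1)
  have htend2 : Filter.Tendsto (fun k => Φ (Φ^[k] f0) z) atTop (nhds (Φ (⇑W) z)) := by
    rw [tendsto_iff_dist_tendsto_zero]
    apply squeeze_zero (g := fun k => (N:ℝ) * K * dist (G k) W * s) (fun k => dist_nonneg)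
      (fun k => by rw [dist_eq_norm]; exact hstep k)
    have := (hdist0.const_mul ((N:ℝ) * K)).mul_const s
    simpa using this
  exact tendsto_nhds_unique htend2 htend1


lemma Setup.sol_mem_Om (S : Setup N z₀ W₀ a b M K F s) {r : ℝ} (hsr : s < r)
    {f : ℂ → Fin N → ℂ}
    (hsol : ∀ z ∈ ball z₀ r, (∀ j, f z j ∈ ball (W₀ j) b) ∧ deriv f z = F (f z, z))
    {ζ : ℂ} (hζ : ζ ∈ closedBall z₀ s) : (f ζ, ζ) ∈ Om N z₀ W₀ a b := by
  have hζr : ζ ∈ ball z₀ r := closedBall_subset_ball hsr hζ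
  refine ⟨(hsol ζ hζr).1, ?_⟩
  rw [mem_ball]
  calc dist ζ z₀ ≤ s := by simpa [mem_closedBall] using hζ
  _ < a := S.hsa

lemma Setup.sol_FTC (S : Setup N z₀ W₀ a b M K F s) {r : ℝ} (hsr : s < r)
    {f : ℂ → Fin N → ℂ}
    (hdiff : DifferentiableOn ℂ f (ball z₀ r)) (hini : f z₀ = W₀)
    (hsol : ∀ z ∈ ball z₀ r, (∀ j, f z j ∈ ball (W₀ j) b) ∧ deriv f z = F (f z, z)) :
    ∀ z ∈ closedBall z₀ s,
      f z = W₀ + ∫ t in (0:ℝ)..1, (z - z₀) •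
        F (f (z₀ + t • (z - z₀)), z₀ + t • (z - z₀)) := by
  intro z hz
  have hLmem : ∀ t ∈ Set.uIcc (0:ℝ) 1, z₀ + t • (z - z₀) ∈ closedBall z₀ s := by
    intro t ht
    rw [Set.uIcc_of_le (zero_le_one : (0:ℝ) ≤ 1)] at ht
    exact seg_mem_closedBall hz ht.1 ht.2
  have hLr : ∀ t ∈ Set.uIcc (0:ℝ) 1, z₀ + t • (z - z₀) ∈ ball z₀ r :=
    fun t ht => closedBall_subset_ball hsr (hLmem t ht)
  have hq : ∀ t ∈ Set.uIcc (0:ℝ) 1, HasDerivAt (fun u : ℝ => f (z₀ + u • (z - z₀)))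
      ((z - z₀) • F (f (z₀ + t • (z - z₀)), z₀ + t • (z - z₀))) t := by
    intro t ht
    have hfd : HasDerivAt f (deriv f (z₀ + t • (z - z₀))) (z₀ + t • (z - z₀)) :=
      (hdiff.differentiableAt (isOpen_ball.mem_nhds (hLr t ht))).hasDerivAt
    have h_inner : HasDerivAt (fun u : ℝ => z₀ + u • (z - z₀)) (z - z₀) t := by
      simpa using ((hasDerivAt_id t).smul_const (z - z₀)).const_add z₀
    have h_comp := hfd.scomp t h_inner
    rw [(hsol _ (hLr t ht)).2] at h_comp
    exact h_comp
  have hcont : ContinuousOn (fun t : ℝ => (z - z₀) •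
      F (f (z₀ + t • (z - z₀)), z₀ + t • (z - z₀))) (Set.uIcc (0:ℝ) 1) := by
    apply ContinuousOn.fun_smul continuousOn_const
    have hFc : ContinuousOn (fun ζ : ℂ => F (f ζ, ζ)) (closedBall z₀ s) := by
      apply S.hF.continuousOn.comp
      · apply ContinuousOn.prodMk
        · exact (hdiff.continuousOn).mono (closedBall_subset_ball hsr)
        · exact continuousOn_id
      · intro ζ hζ
        exact S.sol_mem_Om hsr hsol hζ
    apply hFc.comp
    · exact (continuous_const.add (continuous_id.smul continuous_const)).continuousOn
    · intro t ht
      exact hLmem t ht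
  have hInt := intervalIntegral.integral_eq_sub_of_hasDerivAt hq
    (hcont.intervalIntegrable)
  rw [hInt]
  simp [hini]

lemma Setup.sol_good_fixed (S : Setup N z₀ W₀ a b M K F s) {r : ℝ} (hsr : s < r)
    {f : ℂ → Fin N → ℂ}
    (hdiff : DifferentiableOn ℂ f (ball z₀ r)) (hini : f z₀ = W₀)
    (hsol : ∀ z ∈ ball z₀ r, (∀ j, f z j ∈ ball (W₀ j) b) ∧ deriv f z = F (f z, z)) :
    IsGood N z₀ W₀ M s (fun z => f (clampC z₀ s z)) ∧
      Phi N z₀ W₀ F s (fun z => f (clampC z₀ s z)) = (fun z => f (clampC z₀ s z)) := by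
  have hclmem : ∀ z : ℂ, clampC z₀ s z ∈ closedBall z₀ s := clampC_mem z₀ S.hs0.le
  have hFTC := S.sol_FTC hsr hdiff hini hsol
  have hgood : IsGood N z₀ W₀ M s (fun z => f (clampC z₀ s z)) := by
    constructor
    · exact ((hdiff.continuousOn).mono (closedBall_subset_ball hsr)).comp_continuous
        (continuous_clampC z₀ S.hs0) hclmem
    · intro z hz
      rw [clampC_of_mem hz]
      have h1 := hFTC z hz
      have hb1 : ∀ t ∈ Ι (0:ℝ) 1, ‖(z - z₀) •
          F (f (z₀ + t • (z - z₀)), z₀ + t • (z - z₀))‖ ≤ ‖z - z₀‖ * M := by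
        intro t ht
        rw [uIoc_of_le (zero_le_one : (0:ℝ) ≤ 1)] at ht
        have hpt : z₀ + t • (z - z₀) ∈ closedBall z₀ s := seg_mem_closedBall hz ht.1.le ht.2
        rw [norm_smul]
        exact mul_le_mul_of_nonneg_left (S.hMb _ (S.sol_mem_Om hsr hsol hpt)) (norm_nonneg _)
      have h2 : f z - W₀ = ∫ t in (0:ℝ)..1, (z - z₀) •
          F (f (z₀ + t • (z - z₀)), z₀ + t • (z - z₀)) := by
        rw [h1]; ring_nf
      rw [h2]
      calc ‖∫ t in (0:ℝ)..1, (z - z₀) •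
            F (f (z₀ + t • (z - z₀)), z₀ + t • (z - z₀))‖
          ≤ (‖z - z₀‖ * M) * |1 - 0| :=
            intervalIntegral.norm_integral_le_of_norm_le_const hb1
      _ = M * ‖z - z₀‖ := by rw [show |(1:ℝ) - 0| = 1 by norm_num, mul_one, mul_comm]
    · intro z
      rw [clampC_idem z₀ S.hs0.le]
    · apply DifferentiableOn.congr (hdiff.mono (fun x hx => ball_subset_ball hsr.le hx))
      intro x hx
      rw [clampC_of_mem (ball_subset_closedBall hx)]
  refine ⟨hgood, ?_⟩
  funext z
  have hint_congr : ∫ t in (0:ℝ)..1, (clampC z₀ s z - z₀) •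
      F ((fun w => f (clampC z₀ s w)) (z₀ + t • (clampC z₀ s z - z₀)),
        z₀ + t • (clampC z₀ s z - z₀))
      = ∫ t in (0:ℝ)..1, (clampC z₀ s z - z₀) •
      F (f (z₀ + t • (clampC z₀ s z - z₀)), z₀ + t • (clampC z₀ s z - z₀)) := by
    apply intervalIntegral.integral_congr
    intro t ht
    rw [Set.uIcc_of_le (zero_le_one : (0:ℝ) ≤ 1)] at ht
    have hpt : z₀ + t • (clampC z₀ s z - z₀) ∈ closedBall z₀ s :=
      seg_mem_closedBall (hclmem z) ht.1 ht.2
    simp only [clampC_of_mem hpt]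
  show W₀ + _ = f (clampC z₀ s z)
  rw [hint_congr, ← hFTC (clampC z₀ s z) (hclmem z)]

end ComplexODE

open ComplexODE in
/-- Existence and uniqueness for ODEs in the complex domain (Theorem 1 of the paper):
given `F` holomorphic and bounded by `M` on the polydisc-times-disc, with partial
derivatives in the `w`-directions bounded by `K`, for every `r < min (a, b/M, 1/K)`
there is a unique holomorphic solution `W` of `W' = F (W z, z)`, `W z₀ = W₀`, mapping
the disc `D(z₀, r)` into the polydisc. -/
theorem complex_ode_existence_uniqueness
    (N : ℕ) (hN : 1 ≤ N) (z₀ : ℂ) (W₀ : Fin N → ℂ)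
    (a b M K : ℝ) (ha : 0 < a) (hb : 0 < b)
    (F : (Fin N → ℂ) × ℂ → (Fin N → ℂ))
    (hF : DifferentiableOn ℂ F
      {p : (Fin N → ℂ) × ℂ | (∀ j, p.1 j ∈ ball (W₀ j) b) ∧ p.2 ∈ ball z₀ a})
    (hM : ∀ p ∈ {p : (Fin N → ℂ) × ℂ | (∀ j, p.1 j ∈ ball (W₀ j) b) ∧ p.2 ∈ ball z₀ a},
      ‖F p‖ ≤ M)
    (hK : ∀ j : Fin N,
      ∀ p ∈ {p : (Fin N → ℂ) × ℂ | (∀ j, p.1 j ∈ ball (W₀ j) b) ∧ p.2 ∈ ball z₀ a},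
      ‖fderiv ℂ F p (Pi.single j 1, 0)‖ ≤ K) :
    ∀ r : ℝ, 0 < r → r < min a (min (b / M) (1 / K)) →
      ∃ W : ℂ → (Fin N → ℂ),
        (DifferentiableOn ℂ W (ball z₀ r) ∧ W z₀ = W₀ ∧
          (∀ z ∈ ball z₀ r, (∀ j, W z j ∈ ball (W₀ j) b) ∧ deriv W z = F (W z, z))) ∧
        ∀ W' : ℂ → (Fin N → ℂ),
          (DifferentiableOn ℂ W' (ball z₀ r) ∧ W' z₀ = W₀ ∧
            (∀ z ∈ ball z₀ r, (∀ j, W' z j ∈ ball (W₀ j) b) ∧ deriv W' z = F (W' z, z))) →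
          EqOn W W' (ball z₀ r) := by
  intro r hr hlt
  have hra : r < a := lt_of_lt_of_le hlt (min_le_left _ _)
  have hbM : r < b / M := lt_of_lt_of_le hlt (le_trans (min_le_right _ _) (min_le_left _ _))
  have hM0 : 0 < M := by
    by_contra h
    push_neg at h
    have h2 : b / M ≤ 0 := div_nonpos_iff.mpr (Or.inl ⟨hb.le, h⟩)
    linarith
  have hK0 : 0 ≤ K := le_trans (norm_nonneg _)
    (hK ⟨0, hN⟩ (W₀, z₀) ⟨fun j => mem_ball_self hb, mem_ball_self ha⟩)
  have hMrb : M * r < b := by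
    have h1 := (lt_div_iff₀ hM0).1 hbM
    linarith
  have SS : Setup N z₀ W₀ a b M K F r := ⟨hN, hM0, hK0, hF, hM, hK, hr, hra, hMrb⟩
  obtain ⟨W, hWgood, hWfix⟩ := SS.exists_fixed
  have hWdiff : DifferentiableOn ℂ W (ball z₀ r) := hWgood.diff
  have hWini : W z₀ = W₀ := by
    have h1 := hWgood.bound z₀ (mem_closedBall_self hr.le)
    rw [sub_self, norm_zero, mul_zero] at h1
    exact sub_eq_zero.mp (norm_le_zero_iff.mp h1)
  have hWsol : ∀ z ∈ ball z₀ r, (∀ j, W z j ∈ ball (W₀ j) b) ∧ deriv W z = F (W z, z) := by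
    intro z hz
    constructor
    · intro j
      have h1 : ‖W z - W₀‖ ≤ M * ‖z - z₀‖ := hWgood.bound z (ball_subset_closedBall hz)
      have h2 : ‖z - z₀‖ < r := by simpa [mem_ball, dist_eq_norm] using hz
      have h3 : ‖W z j - W₀ j‖ ≤ ‖W z - W₀‖ := by
        have := norm_le_pi_norm (W z - W₀) j
        simpa using this
      rw [mem_ball, dist_eq_norm]
      calc ‖W z j - W₀ j‖ ≤ M * ‖z - z₀‖ := le_trans h3 h1
      _ < M * r := mul_lt_mul_of_pos_left h2 hM0
      _ < b := hMrb
    · have hDer := SS.hasDerivAt_Phi hWgood hz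
      rw [hWfix] at hDer
      exact hDer.deriv
  refine ⟨W, ⟨hWdiff, hWini, hWsol⟩, ?_⟩
  rintro W' ⟨hd', hi', hs'⟩ z hz
  have hdz : dist z z₀ < r := by simpa [mem_ball] using hz
  have hd0 : (0:ℝ) ≤ dist z z₀ := dist_nonneg
  set σ : ℝ := (dist z z₀ + r) / 2 with hσ
  have hσ0 : 0 < σ := by rw [hσ]; linarith
  have hσr : σ < r := by rw [hσ]; linarith
  have hMσ : M * σ < b := by nlinarith
  have SSσ : Setup N z₀ W₀ a b M K F σ :=
    ⟨hN, hM0, hK0, hF, hM, hK, hσ0, lt_trans hσr hra, hMσ⟩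
  obtain ⟨hg1, hf1⟩ := SSσ.sol_good_fixed hσr hWdiff hWini hWsol
  obtain ⟨hg2, hf2⟩ := SSσ.sol_good_fixed hσr hd' hi' hs'
  have hzσ : z ∈ closedBall z₀ σ := by rw [mem_closedBall, hσ]; linarith
  have hfin := SSσ.fixed_unique hg1 hg2 hf1 hf2 z hzσ
  simp only [clampC_of_mem hzσ] at hfin
  exact hfin
end

section
/- Let N ≥ 2, let U ⊆ ℂ be open and connected with z₀ ∈ U, and let u¹, …, u^N : U → ℂ be holomorphic. Let b₁, a₂, …, a_N be holomorphic on an open set containing u¹(U), and f₂, …, f_N be holomorphic on open sets containing u²(U), …, u^N(U) respectively; assume b₁(u¹(z)) ≠ 0, a_l(u¹(z)) ≠ 0 (2 ≤ l ≤ N) and f_l(u^l(z)) ≠ 0 (2 ≤ l ≤ N) for all z ∈ U, and that u¹ is not a constant function. Assume the geodesic system of the warped product holds on U: (u¹)″ + (b₁′(u¹)/(2b₁(u¹)))·((u¹)′)² − Σ_{l=2}^N (a_l′(u¹)f_l(u^l)/(2b₁(u¹)))·((u^l)′)² = 0, and (u^k)″ + (f_k′(u^k)/(2f_k(u^k)))·((u^k)′)²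 + (a_k′(u¹)/a_k(u¹))·(u¹)′·(u^k)′ = 0 for k = 2,…,N. Define A_k := ((u^k)′(z₀))² f_k(u^k(z₀)) a_k(u¹(z₀))² for k = 2,…,N and A₁ := ((u¹)′(z₀))² b₁(u¹(z₀)) + Σ_{l=2}^N A_l/a_l(u¹(z₀)). Then for all z ∈ U: ((u¹)′(z))² b₁(u¹(z)) = A₁ − Σ_{l=2}^N A_l/a_l(u¹(z)), and ((u^k)′(z))² f_k(u^k(z)) a_k(u¹(z))² = A_k for every k = 2,…,N. -/
open Finset

lemma const_of_hasDerivAt_zero {U : Set ℂ} (hUo : IsOpen U) (hUc : IsPreconnected U)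
    {F : ℂ → ℂ} (hF : ∀ z ∈ U, HasDerivAt F 0 z)
    {x y : ℂ} (hx : x ∈ U) (hy : y ∈ U) : F x = F y := by
  have hdiff : DifferentiableOn ℂ F U := fun p hp =>
    ((hF p hp).differentiableAt).differentiableWithinAt
  have hFan : AnalyticOnNhd ℂ F U := hdiff.analyticOnNhd hUo
  have hcan : AnalyticOnNhd ℂ (fun _ : ℂ => F x) U := fun z _ => analyticAt_const
  obtain ⟨r, hr, hball⟩ := Metric.isOpen_iff.1 hUo x hx
  have hev : F =ᶠ[nhds x] (fun _ => F x) := by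
    filter_upwards [Metric.ball_mem_nhds x hr] with w hw
    exact (convex_ball x r).is_const_of_fderivWithin_eq_zero
      (fun p hp => ((hF p (hball hp)).differentiableAt).differentiableWithinAt)
      (fun p hp => by
        rw [fderivWithin_of_isOpen Metric.isOpen_ball hp, (hF p (hball hp)).hasFDerivAt.fderiv]
        apply ContinuousLinearMap.ext; intro t; simp)
      hw (Metric.mem_ball_self hr)
  exact hFan.eqOn_of_preconnected_of_eventuallyEq hcan hUc hx hev hy |>.symm

/-- First integrals of the geodesic system of a warped product
`Λ = b₁(u¹) du¹⊙du¹ + Σ_{l≥2} a_l(u¹) f_l(u^l) du^l⊙du^l` along a geodesic whose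
first component `u¹` is not constant and whose values stay metrically ordinary:
`(u̇¹)² b₁(u¹) = A₁ − Σ_{l≥2} A_l / a_l(u¹)` and
`(u̇^k)² f_k(u^k) a_k(u¹)² = A_k` for `k ≥ 2`, where the constants `A_k` are
determined by the initial values at `z₀`. -/
theorem warpedProduct_first_integral_nonconstant
    (N : ℕ) (hN : 2 ≤ N) [NeZero N]
    (U : Set ℂ) (hUo : IsOpen U) (hUc : IsPreconnected U) (z₀ : ℂ) (hz₀ : z₀ ∈ U)
    (u : Fin N → ℂ → ℂ) (hu : ∀ i, DifferentiableOn ℂ (u i) U)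
    (b₁ : ℂ → ℂ) (a f : Fin N → ℂ → ℂ)
    (hb : ∀ z ∈ U, DifferentiableAt ℂ b₁ (u 0 z))
    (ha : ∀ l, l ≠ 0 → ∀ z ∈ U, DifferentiableAt ℂ (a l) (u 0 z))
    (hf : ∀ l, l ≠ 0 → ∀ z ∈ U, DifferentiableAt ℂ (f l) (u l z))
    (hbne : ∀ z ∈ U, b₁ (u 0 z) ≠ 0)
    (hane : ∀ l, l ≠ 0 → ∀ z ∈ U, a l (u 0 z) ≠ 0)
    (hfne : ∀ l, l ≠ 0 → ∀ z ∈ U, f l (u l z) ≠ 0)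
    (hnonconst : ¬ ∃ c : ℂ, ∀ z ∈ U, u 0 z = c)
    (hgeo1 : ∀ z ∈ U,
      deriv (deriv (u 0)) z
        + deriv b₁ (u 0 z) / (2 * b₁ (u 0 z)) * (deriv (u 0) z) ^ 2
        - ∑ l ∈ univ.erase (0 : Fin N),
            deriv (a l) (u 0 z) * f l (u l z) / (2 * b₁ (u 0 z)) * (deriv (u l) z) ^ 2
        = 0)
    (hgeok : ∀ k, k ≠ 0 → ∀ z ∈ U,
      deriv (deriv (u k)) z
        + deriv (f k) (u k z) / (2 * f k (u k z)) * (deriv (u k) z) ^ 2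
        + deriv (a k) (u 0 z) / a k (u 0 z) * deriv (u 0) z * deriv (u k) z
        = 0)
    (A : Fin N → ℂ)
    (hAk : ∀ k, k ≠ 0 →
      A k = (deriv (u k) z₀) ^ 2 * f k (u k z₀) * (a k (u 0 z₀)) ^ 2)
    (hA1 : A 0 = (deriv (u 0) z₀) ^ 2 * b₁ (u 0 z₀)
        + ∑ l ∈ univ.erase (0 : Fin N), A l / a l (u 0 z₀)) :
    ∀ z ∈ U,
      ((deriv (u 0) z) ^ 2 * b₁ (u 0 z)
          = A 0 - ∑ l ∈ univ.erase (0 : Fin N), A l / a l (u 0 z)) ∧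
      ∀ k, k ≠ 0 →
        (deriv (u k) z) ^ 2 * f k (u k z) * (a k (u 0 z)) ^ 2 = A k := by
  -- basic differentiability facts
  have hUdiff : ∀ i, ∀ z ∈ U, DifferentiableAt ℂ (u i) z := fun i z hz =>
    (hu i).differentiableAt (hUo.mem_nhds hz)
  have hAn : ∀ i, AnalyticOnNhd ℂ (u i) U := fun i => (hu i).analyticOnNhd hUo
  have hud2 : ∀ i, ∀ z ∈ U, DifferentiableAt ℂ (deriv (u i)) z := fun i z hz =>
    ((hAn i).deriv z hz).differentiableAt
  -- second integrals: F_k is constant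
  have hFk : ∀ k, k ≠ 0 → ∀ z ∈ U,
      (deriv (u k) z) ^ 2 * f k (u k z) * (a k (u 0 z)) ^ 2 = A k := by
    intro k hk
    have hzero : ∀ z ∈ U, HasDerivAt
        (fun w => (deriv (u k) w) ^ 2 * f k (u k w) * (a k (u 0 w)) ^ 2) 0 z := by
      intro z hz
      have hcf : HasDerivAt (fun w => f k (u k w))
          (deriv (f k) (u k z) * deriv (u k) z) z :=
        (hf k hk z hz).hasDerivAt.comp z (hUdiff k z hz).hasDerivAt
      have hca : HasDerivAt (fun w => a k (u 0 w))
          (deriv (a k) (u 0 z) * deriv (u 0) z) z :=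
        (ha k hk z hz).hasDerivAt.comp z (hUdiff 0 z hz).hasDerivAt
      have hD := (((hud2 k z hz).hasDerivAt.pow 2).mul hcf).mul (hca.pow 2)
      refine hD.congr_deriv ?_
      symm
      simp only [Pi.pow_apply, Pi.mul_apply]
      have hg := hgeok k hk z hz
      have hfz := hfne k hk z hz
      have haz := hane k hk z hz
      field_simp at hg
      push_cast
      linear_combination (-(deriv (u k) z * a k (u 0 z))) * hg
    intro z hz
    rw [hAk k hk]
    exact const_of_hasDerivAt_zero hUo hUc hzero hz hz₀
  -- first integral for component 0
  have hG : ∀ z ∈ U, HasDerivAt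
      (fun w => (deriv (u 0) w) ^ 2 * b₁ (u 0 w)
          + ∑ l ∈ univ.erase (0 : Fin N), A l / a l (u 0 w)) 0 z := by
    intro z hz
    have hcb : HasDerivAt (fun w => b₁ (u 0 w))
        (deriv b₁ (u 0 z) * deriv (u 0) z) z :=
      (hb z hz).hasDerivAt.comp z (hUdiff 0 z hz).hasDerivAt
    have hterm : ∀ l ∈ univ.erase (0 : Fin N), HasDerivAt (fun w => A l / a l (u 0 w))
        ((0 * a l (u 0 z) - A l * (deriv (a l) (u 0 z) * deriv (u 0) z)) / a l (u 0 z) ^ 2)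
        z := by
      intro l hl
      have hl0 : l ≠ 0 := (Finset.mem_erase.1 hl).1
      have hca : HasDerivAt (fun w => a l (u 0 w))
          (deriv (a l) (u 0 z) * deriv (u 0) z) z :=
        (ha l hl0 z hz).hasDerivAt.comp z (hUdiff 0 z hz).hasDerivAt
      exact (hasDerivAt_const z (A l)).div hca (hane l hl0 z hz)
    have hD := (((hud2 0 z hz).hasDerivAt.pow 2).mul hcb).add
      (HasDerivAt.fun_sum hterm)
    refine hD.congr_deriv ?_
    symm
    simp only [Pi.pow_apply, Pi.mul_apply]
    -- rewrite the sum of divisions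
    have hsum : ∑ l ∈ univ.erase (0 : Fin N),
        (0 * a l (u 0 z) - A l * (deriv (a l) (u 0 z) * deriv (u 0) z)) / a l (u 0 z) ^ 2
        = -(deriv (u 0) z) * ∑ l ∈ univ.erase (0 : Fin N),
            deriv (a l) (u 0 z) * f l (u l z) * (deriv (u l) z) ^ 2 := by
      rw [Finset.mul_sum]
      refine Finset.sum_congr rfl fun l hl => ?_
      have hl0 : l ≠ 0 := (Finset.mem_erase.1 hl).1
      rw [← hFk l hl0 z hz]
      have haz := hane l hl0 z hz
      field_simp
      ring
    have hg := hgeo1 z hz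
    have hS : ∑ l ∈ univ.erase (0 : Fin N),
        deriv (a l) (u 0 z) * f l (u l z) / (2 * b₁ (u 0 z)) * (deriv (u l) z) ^ 2
        = (∑ l ∈ univ.erase (0 : Fin N),
            deriv (a l) (u 0 z) * f l (u l z) * (deriv (u l) z) ^ 2) / (2 * b₁ (u 0 z)) := by
      rw [Finset.sum_div]
      exact Finset.sum_congr rfl fun l _ => by ring
    rw [hS] at hg
    rw [hsum]
    set T := ∑ l ∈ univ.erase (0 : Fin N),
        deriv (a l) (u 0 z) * f l (u l z) * (deriv (u l) z) ^ 2 with hT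
    have hbz := hbne z hz
    field_simp at hg
    push_cast
    linear_combination (-(deriv (u 0) z)) * hg
  intro z hz
  refine ⟨?_, fun k hk => hFk k hk z hz⟩
  have hGc := const_of_hasDerivAt_zero hUo hUc hG hz hz₀
  rw [← hA1] at hGc
  linear_combination hGc
end

section
/- Let N ≥ 2, let U ⊆ ℂ be open and connected with z₀ ∈ U, and let u¹, …, u^N : U → ℂ be holomorphic with u¹ a constant function. Let b₁, a₂, …, a_N be holomorphic on an open set containing u¹(U), and f₂, …, f_N be holomorphic on open sets containing u²(U), …, u^N(U) respectively; assume b₁(u¹(z)) ≠ 0, a_l(u¹(z)) ≠ 0 and f_l(u^l(z)) ≠ 0 for all z ∈ U and 2 ≤ l ≤ N. Assume the geodesic system of the warped product holds on U: (u¹)″ + (b₁′(u¹)/(2b₁(u¹)))·((u¹)′)² − Σ_{l=2}^N (a_l′(u¹)f_l(u^l)/(2b₁(u¹)))·((u^l)′)² = 0, and (u^k)″ + (f_k′(u^k)/(2f_k(u^k)))·((u^k)′)² + (a_k′(u¹)/a_k(u¹))·(u¹)′·(u^k)′ = 0 for k = 2,…,N. Then for every k = 2,…,N and all z ∈ U: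 ((u^k)′(z))² f_k(u^k(z)) = A_k, where A_k := ((u^k)′(z₀))² f_k(u^k(z₀)). -/
open Finset

/-- First integrals of the geodesic system of a warped product
`Λ = b₁(u¹) du¹⊙du¹ + Σ_{l≥2} a_l(u¹) f_l(u^l) du^l⊙du^l` along a geodesic with
constant first component `u¹`: for every `k ≥ 2`,
`(u̇^k)² f_k(u^k) = A_k` with `A_k = (u̇^k(z₀))² f_k(u^k(z₀))`. -/
theorem warpedProduct_first_integral_constant
    (N : ℕ) (hN : 2 ≤ N) [NeZero N]
    (U : Set ℂ) (hUo : IsOpen U) (hUc : IsPreconnected U) (z₀ : ℂ) (hz₀ : z₀ ∈ U)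
    (u : Fin N → ℂ → ℂ) (hu : ∀ i, DifferentiableOn ℂ (u i) U)
    (hconst : ∀ z ∈ U, u 0 z = u 0 z₀)
    (b₁ : ℂ → ℂ) (a f : Fin N → ℂ → ℂ)
    (hb : ∀ z ∈ U, DifferentiableAt ℂ b₁ (u 0 z))
    (ha : ∀ l, l ≠ 0 → ∀ z ∈ U, DifferentiableAt ℂ (a l) (u 0 z))
    (hf : ∀ l, l ≠ 0 → ∀ z ∈ U, DifferentiableAt ℂ (f l) (u l z))
    (hbne : ∀ z ∈ U, b₁ (u 0 z) ≠ 0)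
    (hane : ∀ l, l ≠ 0 → ∀ z ∈ U, a l (u 0 z) ≠ 0)
    (hfne : ∀ l, l ≠ 0 → ∀ z ∈ U, f l (u l z) ≠ 0)
    (hgeo1 : ∀ z ∈ U,
      deriv (deriv (u 0)) z
        + deriv b₁ (u 0 z) / (2 * b₁ (u 0 z)) * (deriv (u 0) z) ^ 2
        - ∑ l ∈ univ.erase (0 : Fin N),
            deriv (a l) (u 0 z) * f l (u l z) / (2 * b₁ (u 0 z)) * (deriv (u l) z) ^ 2
        = 0)
    (hgeok : ∀ k, k ≠ 0 → ∀ z ∈ U,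
      deriv (deriv (u k)) z
        + deriv (f k) (u k z) / (2 * f k (u k z)) * (deriv (u k) z) ^ 2
        + deriv (a k) (u 0 z) / a k (u 0 z) * deriv (u 0) z * deriv (u k) z
        = 0) :
    ∀ k, k ≠ 0 → ∀ z ∈ U,
      (deriv (u k) z) ^ 2 * f k (u k z)
        = (deriv (u k) z₀) ^ 2 * f k (u k z₀) := by

  intro k hk z hz
  -- the function whose constancy we prove
  set g : ℂ → ℂ := fun w => (deriv (u k) w) ^ 2 * f k (u k w) with hg
  -- u k is analytic on U
  have hanak : AnalyticOnNhd ℂ (u k) U := (hu k).analyticOnNhd hUo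
  -- deriv (u k) is analytic on U
  have hanad : AnalyticOnNhd ℂ (deriv (u k)) U := hanak.deriv
  -- g is differentiable, hence analytic, on U
  have hdiffg : DifferentiableOn ℂ g U := by
    intro w hw
    have h1 : DifferentiableAt ℂ (fun x => (deriv (u k) x) ^ 2) w :=
      ((hanad w hw).differentiableAt).pow 2
    have h2 : DifferentiableAt ℂ (fun x => f k (u k x)) w :=
      (hf k hk w hw).comp w ((hanak w hw).differentiableAt)
    exact (h1.mul h2).differentiableWithinAt
  have hanag : AnalyticOnNhd ℂ g U := hdiffg.analyticOnNhd hUo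
  -- deriv (u 0) vanishes on U
  have hd0 : ∀ w ∈ U, deriv (u 0) w = 0 := by
    intro w hw
    have hev : u 0 =ᶠ[nhds w] fun _ => u 0 z₀ :=
      Filter.eventuallyEq_of_mem (hUo.mem_nhds hw) (fun x hx => hconst x hx)
    rw [hev.deriv_eq]
    simp
  -- derivative of g vanishes on U
  have hderivg : ∀ w ∈ U, deriv g w = 0 := by
    intro w hw
    have hd1 : HasDerivAt (u k) (deriv (u k) w) w :=
      ((hanak w hw).differentiableAt).hasDerivAt
    have hd2 : HasDerivAt (deriv (u k)) (deriv (deriv (u k)) w) w :=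
      ((hanad w hw).differentiableAt).hasDerivAt
    have hdf : HasDerivAt (f k) (deriv (f k) (u k w)) (u k w) :=
      (hf k hk w hw).hasDerivAt
    have hcomp : HasDerivAt (fun x => f k (u k x)) (deriv (f k) (u k w) * deriv (u k) w) w :=
      hdf.comp w hd1
    have hG : HasDerivAt g
        (2 * deriv (u k) w ^ 1 * deriv (deriv (u k)) w * f k (u k w)
          + (deriv (u k) w) ^ 2 * (deriv (f k) (u k w) * deriv (u k) w)) w :=
      (hd2.pow 2).mul hcomp
    have hgeo := hgeok k hk w hw
    rw [hd0 w hw] at hgeo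
    have hfne' := hfne k hk w hw
    have hdd : deriv (deriv (u k)) w
        = - (deriv (f k) (u k w) / (2 * f k (u k w)) * (deriv (u k) w) ^ 2) := by
      linear_combination hgeo
    rw [hG.deriv, hdd]
    field_simp
    ring
  -- g is constant near z₀
  have hball : ∃ r > 0, Metric.ball z₀ r ⊆ U := Metric.isOpen_iff.mp hUo z₀ hz₀
  obtain ⟨r, hr, hball⟩ := hball
  have hconstnear : g =ᶠ[nhds z₀] fun _ => g z₀ := by
    have hconv : Convex ℝ (Metric.ball z₀ r) := convex_ball z₀ r
    have hdiff : DifferentiableOn ℂ g (Metric.ball z₀ r) :=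
      fun x hx => ((hanag x (hball hx)).differentiableAt).differentiableWithinAt
    have heq : ∀ x ∈ Metric.ball z₀ r, g x = g z₀ := by
      intro x hx
      apply hconv.is_const_of_fderivWithin_eq_zero hdiff _ hx (Metric.mem_ball_self hr)
      intro y hy
      have hdy : DifferentiableAt ℂ g y := (hanag y (hball hy)).differentiableAt
      have h := hdy.hasDerivAt
      rw [hderivg y (hball hy)] at h
      have h0 : fderiv ℂ g y = 0 := by
        rw [h.hasFDerivAt.fderiv]
        ext
        simp
      rw [fderivWithin_of_isOpen Metric.isOpen_ball hy, h0]
    exact Filter.eventuallyEq_of_mem (Metric.isOpen_ball.mem_nhds (Metric.mem_ball_self hr))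
      heq
  -- identity theorem
  have := hanag.eqOn_of_preconnected_of_eventuallyEq
    (analyticOnNhd_const : AnalyticOnNhd ℂ (fun _ => g z₀) U) hUc hz₀ hconstnear hz
  simpa [hg] using this
end

section
/- Let B, C ∈ ℝ and consider the curve γ(t) = (1/(C − Bt), 0) in ℝ², defined on the open set {t ∈ ℝ : C − Bt ≠ 0}. Then γ satisfies the Clifton–Pohl geodesic equations on its domain: writing u(t) = 1/(C − Bt) and v(t) = 0, one has ü(t) = (2u(t)/(u(t)² + v(t)²))·u̇(t)² and v̈(t) = (2v(t)/(u(t)² + v(t)²))·v̇(t)² for all t in the domain. -/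
private lemma hasDeriv1 (B C : ℝ) {t : ℝ} (ht : C - B * t ≠ 0) :
    HasDerivAt (fun s => 1 / (C - B * s)) (B / (C - B * t) ^ 2) t := by
  have h : HasDerivAt (fun s : ℝ => C - B * s) (-B) t := by
    simpa using ((hasDerivAt_id t).const_mul B).const_sub C
  have := h.inv ht
  simpa [one_div, neg_neg, div_eq_mul_inv, Pi.inv_def] using this.congr_deriv (by
    field_simp)

private lemma hasDeriv2 (B C : ℝ) {t : ℝ} (ht : C - B * t ≠ 0) :
    HasDerivAt (fun s => B / (C - B * s) ^ 2) (2 * B ^ 2 / (C - B * t) ^ 3) t := by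
  have h : HasDerivAt (fun s : ℝ => C - B * s) (-B) t := by
    simpa using ((hasDerivAt_id t).const_mul B).const_sub C
  have h2 : HasDerivAt (fun s : ℝ => (C - B * s) ^ 2)
      (2 * (C - B * t) * (-B)) t := by
    simpa [Pi.pow_def] using h.pow 2
  have h3 := (h2.inv (pow_ne_zero 2 ht)).const_mul B
  have : HasDerivAt (fun s => B / (C - B * s) ^ 2)
      (B * (-(2 * (C - B * t) * (-B)) / ((C - B * t) ^ 2) ^ 2)) t := by
    simpa [div_eq_mul_inv] using h3
  refine this.congr_deriv ?_
  field_simp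

/-- The curve `γ(t) = (1/(C − Bt), 0)` satisfies the Clifton–Pohl geodesic
equations `ü = (2u/(u²+v²))·u̇²`, `v̈ = (2v/(u²+v²))·v̇²` on its domain
`{t : C − Bt ≠ 0}`. -/
theorem cliftonPohl_null_geodesic_axis (B C : ℝ) :
    ∀ t : ℝ, C - B * t ≠ 0 →
      (deriv (deriv (fun s => 1 / (C - B * s))) t
          = 2 * (1 / (C - B * t))
              / ((1 / (C - B * t)) ^ 2 + (0 : ℝ) ^ 2)
              * (deriv (fun s => 1 / (C - B * s)) t) ^ 2) ∧
      (deriv (deriv (fun _ : ℝ => (0 : ℝ))) t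
          = 2 * (0 : ℝ)
              / ((1 / (C - B * t)) ^ 2 + (0 : ℝ) ^ 2)
              * (deriv (fun _ : ℝ => (0 : ℝ)) t) ^ 2) := by
  intro t ht
  have hopen : IsOpen {s : ℝ | C - B * s ≠ 0} :=
    isOpen_ne.preimage (by continuity)
  have hev : deriv (fun s => 1 / (C - B * s)) =ᶠ[nhds t]
      (fun s => B / (C - B * s) ^ 2) := by
    filter_upwards [hopen.mem_nhds ht] with s hs
    exact (hasDeriv1 B C hs).deriv
  constructor
  · rw [hev.deriv_eq, (hasDeriv2 B C ht).deriv, (hasDeriv1 B C ht).deriv]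
    field_simp
    ring
  · simp
end

section
/- Let A ∈ ℝ with A ≠ 0 and let B ∈ ℝ. Consider the curve γ(t) = (A·tan(At + B), A) in ℝ², defined on the open set {t ∈ ℝ : cos(At + B) ≠ 0}. Then γ satisfies the Clifton–Pohl geodesic equations on its domain: writing u(t) = A·tan(At + B) and v(t) = A, one has ü(t) = (2u(t)/(u(t)² + v(t)²))·u̇(t)² and v̈(t) = (2v(t)/(u(t)² + v(t)²))·v̇(t)² for all t in the domain. -/
/-- The curve `γ(t) = (A·tan(At + B), A)` (`A ≠ 0`) satisfies the Clifton–Pohl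
geodesic equations `ü = (2u/(u²+v²))·u̇²`, `v̈ = (2v/(u²+v²))·v̇²` on its domain
`{t : cos(At + B) ≠ 0}`. -/
theorem cliftonPohl_null_geodesic_tan (A B : ℝ) (hA : A ≠ 0) :
    ∀ t : ℝ, Real.cos (A * t + B) ≠ 0 →
      (deriv (deriv (fun s => A * Real.tan (A * s + B))) t
          = 2 * (A * Real.tan (A * t + B))
              / ((A * Real.tan (A * t + B)) ^ 2 + A ^ 2)
              * (deriv (fun s => A * Real.tan (A * s + B)) t) ^ 2) ∧
      (deriv (deriv (fun _ : ℝ => A)) t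
          = 2 * A
              / ((A * Real.tan (A * t + B)) ^ 2 + A ^ 2)
              * (deriv (fun _ : ℝ => A) t) ^ 2) := by
  have haff : ∀ s : ℝ, HasDerivAt (fun s : ℝ => A * s + B) A s := fun s => by
    simpa using ((hasDerivAt_id s).const_mul A).add_const B
  have hd1 : deriv (fun s => A * Real.tan (A * s + B))
      = fun s => A ^ 2 / Real.cos (A * s + B) ^ 2 := by
    funext s
    by_cases hc : Real.cos (A * s + B) = 0
    · have hnd : ¬ DifferentiableAt ℝ (fun s => A * Real.tan (A * s + B)) s := by
        intro h
        have h' : DifferentiableAt ℝ (fun s => Real.tan (A * s + B)) s := by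
          have := h.const_mul A⁻¹
          simpa [inv_mul_cancel_left₀ hA] using this
        have hinner : DifferentiableAt ℝ (fun x : ℝ => (x - B) / A) (A * s + B) :=
          (differentiableAt_id.sub_const B).div_const A
        have hs : (A * s + B - B) / A = s := by
          field_simp; ring
        have hcomp : DifferentiableAt ℝ
            ((fun s => Real.tan (A * s + B)) ∘ (fun x : ℝ => (x - B) / A)) (A * s + B) := by
          apply DifferentiableAt.comp
          · show DifferentiableAt ℝ _ ((A * s + B - B) / A)
            rw [hs]; exact h'
          · exact hinner
        have htan : DifferentiableAt ℝ Real.tan (A * s + B) := by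
          have : ((fun s => Real.tan (A * s + B)) ∘ (fun x : ℝ => (x - B) / A))
              = Real.tan := by
            funext x
            simp only [Function.comp]
            have hx : A * ((x - B) / A) + B = x := by field_simp; ring
            rw [hx]
          rwa [this] at hcomp
        exact Real.differentiableAt_tan.mp htan hc
      rw [deriv_zero_of_not_differentiableAt hnd, hc]
      simp
    · have h2 := ((Real.hasDerivAt_tan hc).comp s (haff s)).const_mul A
      have h2' : HasDerivAt (fun s => A * Real.tan (A * s + B))
          (A * (1 / Real.cos (A * s + B) ^ 2 * A)) s := by
        simpa [Function.comp] using h2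
      rw [h2'.deriv]
      field_simp
  intro t ht
  refine ⟨?_, by simp⟩
  rw [hd1]
  have hcos : HasDerivAt (fun s => Real.cos (A * s + B)) (-Real.sin (A * t + B) * A) t :=
    (Real.hasDerivAt_cos _).comp t (haff t)
  have hsq : HasDerivAt (fun s => Real.cos (A * s + B) ^ 2)
      (2 * Real.cos (A * t + B) * (-Real.sin (A * t + B) * A)) t := by
    simpa [mul_comm, mul_assoc] using hcos.fun_pow 2
  have hc2 : Real.cos (A * t + B) ^ 2 ≠ 0 := pow_ne_zero _ ht
  have hdiv := (hasDerivAt_const t (A ^ 2)).fun_div hsq hc2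
  rw [hdiv.deriv]
  have hden : (A * Real.tan (A * t + B)) ^ 2 + A ^ 2 ≠ 0 := by positivity
  rw [Real.tan_eq_sin_div_cos]
  field_simp
  linear_combination (A ^ 3 * Real.sin (A * t + B) * 2) *
    Real.sin_sq_add_cos_sq (A * t + B)
end

section
/- Let I ⊆ ℝ be an open interval and let u, v : I → ℝ be twice differentiable with u(t)² + v(t)² ≠ 0, u̇(t) ≠ 0 and v̇(t) ≠ 0 for all t ∈ I. Assume u and v satisfy the Clifton–Pohl geodesic equations on I: ü = (2u/(u²+v²))·u̇² and v̈ = (2v/(u²+v²))·v̇². Then the functions t ↦ u̇(t)v̇(t)/(u(t)² + v(t)²) and t ↦ u(t)/u̇(t) + v(t)/v̇(t) are constant on I; that is, there exist constants A, B ∈ ℝ with u̇v̇ = A(u² + v²) and u/u̇ + v/v̇ = B on I. -/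
/-- On an open convex set, a function with vanishing derivative is constant. -/
lemma const_of_hasDerivAt_zero_s13 {I : Set ℝ} (hIo : IsOpen I) (hconv : Convex ℝ I)
    {f : ℝ → ℝ} (hf : ∀ t ∈ I, HasDerivAt f 0 t) :
    ∀ x ∈ I, ∀ y ∈ I, f x = f y := by
  intro x hx y hy
  refine hconv.is_const_of_fderivWithin_eq_zero
    (fun t ht => ((hf t ht).differentiableAt).differentiableWithinAt) ?_ hx hy
  intro t ht
  rw [fderivWithin_of_isOpen hIo ht]
  have : deriv f t = 0 := (hf t ht).deriv
  ext
  simp [← toSpanSingleton_deriv, this]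

/-- First integrals of the Clifton–Pohl geodesic equations: along a nonnull
geodesic (a twice differentiable curve avoiding the origin, with nonvanishing
component velocities, satisfying `ü = (2u/(u²+v²))·u̇²` and `v̈ = (2v/(u²+v²))·v̇²`
on an open interval `I`) the quantities `u̇v̇/(u² + v²)` and `u/u̇ + v/v̇` are
constant: there are `A, B ∈ ℝ` with `u̇v̇ = A(u² + v²)` and `u/u̇ + v/v̇ = B` on `I`. -/
theorem cliftonPohl_first_integrals
    (I : Set ℝ) (hIo : IsOpen I) (hIc : IsPreconnected I)
    (u v : ℝ → ℝ)
    (hud : ∀ t ∈ I, DifferentiableAt ℝ u t)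
    (hvd : ∀ t ∈ I, DifferentiableAt ℝ v t)
    (hud2 : ∀ t ∈ I, DifferentiableAt ℝ (deriv u) t)
    (hvd2 : ∀ t ∈ I, DifferentiableAt ℝ (deriv v) t)
    (hne : ∀ t ∈ I, u t ^ 2 + v t ^ 2 ≠ 0)
    (hu' : ∀ t ∈ I, deriv u t ≠ 0)
    (hv' : ∀ t ∈ I, deriv v t ≠ 0)
    (hgu : ∀ t ∈ I,
      deriv (deriv u) t = 2 * u t / (u t ^ 2 + v t ^ 2) * (deriv u t) ^ 2)
    (hgv : ∀ t ∈ I,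
      deriv (deriv v) t = 2 * v t / (u t ^ 2 + v t ^ 2) * (deriv v t) ^ 2) :
    ∃ A B : ℝ, ∀ t ∈ I,
      deriv u t * deriv v t = A * (u t ^ 2 + v t ^ 2) ∧
      u t / deriv u t + v t / deriv v t = B := by
  rcases I.eq_empty_or_nonempty with rfl | ⟨t₀, ht₀⟩
  · exact ⟨0, 0, fun t ht => ht.elim⟩
  have hconv : Convex ℝ I := hIc.ordConnected.convex
  -- derivative facts at a point of I
  have key : ∀ t ∈ I,
      HasDerivAt (fun t => deriv u t * deriv v t / (u t ^ 2 + v t ^ 2)) 0 t ∧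
      HasDerivAt (fun t => u t / deriv u t + v t / deriv v t) 0 t := by
    intro t ht
    have hu := (hud t ht).hasDerivAt
    have hv := (hvd t ht).hasDerivAt
    have hu2 := (hud2 t ht).hasDerivAt
    have hv2 := (hvd2 t ht).hasDerivAt
    rw [hgu t ht] at hu2
    rw [hgv t ht] at hv2
    have hS : HasDerivAt (fun t => u t ^ 2 + v t ^ 2)
        (2 * u t * deriv u t + 2 * v t * deriv v t) t := by
      have h1 := (hu.fun_pow 2).fun_add (hv.fun_pow 2)
      refine h1.congr_deriv ?_
      ring
    have hN : HasDerivAt (fun t => deriv u t * deriv v t)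
        (2 * u t / (u t ^ 2 + v t ^ 2) * (deriv u t) ^ 2 * deriv v t
          + deriv u t * (2 * v t / (u t ^ 2 + v t ^ 2) * (deriv v t) ^ 2)) t :=
      hu2.mul hv2
    constructor
    · have h := hN.fun_div hS (hne t ht)
      refine h.congr_deriv ?_
      have hs := hne t ht
      field_simp
      ring
    · have h1 : HasDerivAt (fun t => u t / deriv u t)
          ((deriv u t * deriv u t - u t *
            (2 * u t / (u t ^ 2 + v t ^ 2) * (deriv u t) ^ 2)) / (deriv u t) ^ 2) t :=
        hu.div hu2 (hu' t ht)
      have h2 : HasDerivAt (fun t => v t / deriv v t)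
          ((deriv v t * deriv v t - v t *
            (2 * v t / (u t ^ 2 + v t ^ 2) * (deriv v t) ^ 2)) / (deriv v t) ^ 2) t :=
        hv.div hv2 (hv' t ht)
      have h := h1.fun_add h2
      refine h.congr_deriv ?_
      have hs := hne t ht
      have hu0 := hu' t ht
      have hv0 := hv' t ht
      field_simp
      ring
  refine ⟨deriv u t₀ * deriv v t₀ / (u t₀ ^ 2 + v t₀ ^ 2),
      u t₀ / deriv u t₀ + v t₀ / deriv v t₀, fun t ht => ?_⟩
  have hA := const_of_hasDerivAt_zero_s13 hIo hconv (fun s hs => (key s hs).1) t ht t₀ ht₀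
  have hB := const_of_hasDerivAt_zero_s13 hIo hconv (fun s hs => (key s hs).2) t ht t₀ ht₀
  constructor
  · rw [div_eq_div_iff (hne t ht) (hne t₀ ht₀)] at hA
    rw [div_mul_eq_mul_div, eq_div_iff (hne t₀ ht₀)]
    linarith [hA]
  · exact hB
end

section
/- Let A, B, φ₀ ∈ ℝ with A ≠ 0 and B² − 2/(A·cosh(φ₀)) > 0, and assume that A < 0 or A·B² > 2. Then there is no differentiable function φ : ℝ → ℝ with φ(0) = φ₀ satisfying φ′(t) = 2A·cosh(φ(t))·√(B² − 2/(A·cosh(φ(t)))) for all t ∈ ℝ; that is, the Cauchy problem φ̇ = 2A·cosh(φ)·√(B² − 2/(A·cosh(φ))), φ(0) = φ₀ admits no global real solution. -/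
/-- Finite-time blow-up: no globally defined `ψ` can satisfy
`ψ' ≥ k·exp(c·ψ)` for positive `k, c`. -/
lemma blowup_aux (ψ ψ' : ℝ → ℝ) (k c : ℝ) (hk : 0 < k) (hc : 0 < c)
    (hd : ∀ t, HasDerivAt ψ (ψ' t) t)
    (hb : ∀ t, k * Real.exp (c * ψ t) ≤ ψ' t) : False := by
  set g : ℝ → ℝ := fun t => -Real.exp (-(c * ψ t)) / c - k * t with hg
  have hgd : ∀ t, HasDerivAt g (ψ' t * Real.exp (-(c * ψ t)) - k) t := by
    intro t
    have h1 : HasDerivAt (fun t => -(c * ψ t)) (-(c * ψ' t)) t := ((hd t).const_mul c).neg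
    have h2 : HasDerivAt g (-(Real.exp (-(c * ψ t)) * -(c * ψ' t)) / c - k * 1) t := ((h1.exp.neg.div_const c).sub ((hasDerivAt_id t).const_mul k))
    convert h2 using 1
    field_simp
  have hmono : Monotone g := by
    apply monotone_of_deriv_nonneg
    · intro t; exact (hgd t).differentiableAt
    · intro t
      rw [(hgd t).deriv]
      have h4 := mul_le_mul_of_nonneg_right (hb t) (Real.exp_nonneg (-(c * ψ t)))
      have h5 : Real.exp (c * ψ t) * Real.exp (-(c * ψ t)) = 1 := by
        rw [← Real.exp_add]; simp
      nlinarith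
  set E0 : ℝ := Real.exp (-(c * ψ 0)) / c with hE0def
  have hE0 : 0 < E0 := div_pos (Real.exp_pos _) hc
  set T : ℝ := (E0 + 1) / k with hT
  have hT0 : (0:ℝ) ≤ T := le_of_lt (div_pos (by linarith) hk)
  have hm := hmono hT0
  have hgT : g T = -Real.exp (-(c * ψ T)) / c - k * T := rfl
  have hg0 : g 0 = -E0 := by simp [hg, hE0def]; ring
  have hkT : k * T = E0 + 1 := by
    rw [hT]; field_simp
  have hEp : 0 < Real.exp (-(c * ψ T)) / c := div_pos (Real.exp_pos _) hc
  rw [hg0, hgT, hkT, neg_div] at hm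
  linarith

lemma bound_neg (A B y : ℝ) (hA : A < 0) :
    2 * Real.sqrt (-A) * Real.exp ((1/2) * (-y)) ≤
      -(2 * A * Real.cosh y * Real.sqrt (B ^ 2 - 2 / (A * Real.cosh y))) := by
  set C := Real.cosh y with hC
  have hC1 : 1 ≤ C := Real.one_le_cosh y
  have hCpos : 0 < C := by linarith
  set x := (-A) * C with hxdef
  have hx : 0 < x := mul_pos (by linarith) hCpos
  set rad := B ^ 2 - 2 / (A * C) with hrad
  have hAC : A * C = -x := by rw [hxdef]; ring
  have hradge : 2 / x ≤ rad := by
    rw [hrad, hAC]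
    have : 2 / (-x) = -(2 / x) := by ring
    rw [this]
    nlinarith [sq_nonneg B, div_pos (by norm_num : (0:ℝ) < 2) hx]
  have hradpos : 0 < rad := lt_of_lt_of_le (div_pos (by norm_num) hx) hradge
  -- RHS = 2 x √rad = √(4 x² rad)
  have hrw : -(2 * A * C * Real.sqrt rad) = Real.sqrt (4 * x ^ 2 * rad) := by
    rw [Real.sqrt_mul (by positivity), show (4:ℝ) * x ^ 2 = (2*x)^2 by ring]
    rw [Real.sqrt_sq (by positivity)]
    rw [hxdef]; ring
  rw [hrw]
  rw [Real.le_sqrt (by positivity) (by positivity)]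
  have hexp : (2 * Real.sqrt (-A) * Real.exp (1 / 2 * -y)) ^ 2
      = 4 * (-A) * Real.exp (-y) := by
    have h1 : Real.sqrt (-A) ^ 2 = -A := Real.sq_sqrt (by linarith)
    have h2 : Real.exp (1/2 * -y) ^ 2 = Real.exp (-y) := by
      rw [sq, ← Real.exp_add]; ring_nf
    nlinarith [h1, h2]
  rw [hexp]
  -- need 4(-A) e^{-y} ≤ 4 x² rad, using e^{-y} ≤ 2C and x·rad ≥ 2
  have hxr : 2 ≤ x * rad := by
    have := (div_le_iff₀ hx).mp hradge
    linarith
  have hey : Real.exp (-y) ≤ 2 * C := by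
    rw [hC, Real.cosh_eq]
    have := Real.exp_pos y
    linarith
  have hnA : 0 < -A := by linarith
  calc 4 * (-A) * Real.exp (-y) ≤ 4 * (-A) * (2 * C) := by nlinarith
    _ = 4 * x * 2 := by rw [hxdef]; ring
    _ ≤ 4 * x * (x * rad) := by nlinarith
    _ = 4 * x ^ 2 * rad := by ring

lemma bound_pos (A B y : ℝ) (hA : 0 < A) (h2 : 2 < A * B ^ 2) :
    Real.sqrt (A * (A * B ^ 2 - 2)) * Real.exp (1 * y) ≤
      2 * A * Real.cosh y * Real.sqrt (B ^ 2 - 2 / (A * Real.cosh y)) := by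
  set C := Real.cosh y with hC
  have hC1 : 1 ≤ C := Real.one_le_cosh y
  have hCpos : 0 < C := by linarith
  have hACpos : 0 < A * C := mul_pos hA hCpos
  set rad := B ^ 2 - 2 / (A * C) with hrad
  have hradge : (A * B ^ 2 - 2) / A ≤ rad := by
    rw [hrad]
    have h1 : 2 / (A * C) ≤ 2 / A := by
      apply div_le_div_of_nonneg_left (by norm_num) hA
      nlinarith
    have h2' : (A * B ^ 2 - 2) / A = B ^ 2 - 2 / A := by field_simp
    linarith
  have hradpos : 0 < rad :=
    lt_of_lt_of_le (div_pos (by linarith) hA) hradge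
  have hrw : 2 * A * C * Real.sqrt rad = Real.sqrt (4 * (A*C) ^ 2 * rad) := by
    rw [Real.sqrt_mul (by positivity), show (4:ℝ) * (A*C) ^ 2 = (2*(A*C))^2 by ring]
    rw [Real.sqrt_sq (by positivity)]
    ring
  rw [hrw]
  rw [Real.le_sqrt (by positivity) (by positivity)]
  have hexp : (Real.sqrt (A * (A * B ^ 2 - 2)) * Real.exp (1 * y)) ^ 2
      = A * (A * B ^ 2 - 2) * Real.exp y ^ 2 := by
    have h1 : Real.sqrt (A * (A * B ^ 2 - 2)) ^ 2 = A * (A * B ^ 2 - 2) :=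
      Real.sq_sqrt (by nlinarith)
    rw [one_mul, mul_pow, h1]
  rw [hexp]
  have hey : Real.exp y ≤ 2 * C := by
    rw [hC, Real.cosh_eq]
    have := Real.exp_pos (-y)
    linarith
  have hAr : A * B ^ 2 - 2 ≤ A * rad := by
    have := (div_le_iff₀ hA).mp hradge
    linarith [mul_comm rad A]
  have he : 0 < Real.exp y := Real.exp_pos y
  have hP : 0 ≤ A * (A * B ^ 2 - 2) := by nlinarith
  calc A * (A * B ^ 2 - 2) * Real.exp y ^ 2
      = Real.exp y ^ 2 * (A * (A * B ^ 2 - 2)) := by ring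
    _ ≤ (2 * C) ^ 2 * (A * (A * B ^ 2 - 2)) :=
        mul_le_mul_of_nonneg_right (pow_le_pow_left₀ he.le hey 2) hP
    _ = (A * B ^ 2 - 2) * ((2 * C) ^ 2 * A) := by ring
    _ ≤ (A * rad) * ((2 * C) ^ 2 * A) :=
        mul_le_mul_of_nonneg_right hAr (by positivity)
    _ = 4 * (A * C) ^ 2 * rad := by ring

/-- Incompleteness direction of the paper's lemma on the Cauchy problem arising
from nonnull Clifton–Pohl geodesics: if `A < 0` or `A·B² > 2` (so that
`0 < AB² ≤ 2` fails), the Cauchy problem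
`φ̇ = 2A·cosh(φ)·√(B² − 2/(A·cosh(φ)))`, `φ(0) = φ₀` has no global real solution. -/
theorem cliftonPohl_cauchy_incomplete
    (A B φ₀ : ℝ) (hA : A ≠ 0)
    (hpos : 0 < B ^ 2 - 2 / (A * Real.cosh φ₀))
    (hcase : A < 0 ∨ 2 < A * B ^ 2) :
    ¬ ∃ φ : ℝ → ℝ, φ 0 = φ₀ ∧ ∀ t : ℝ,
      HasDerivAt φ
        (2 * A * Real.cosh (φ t)
          * Real.sqrt (B ^ 2 - 2 / (A * Real.cosh (φ t)))) t := by
  rintro ⟨φ, hφ0, hder⟩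
  by_cases hAneg : A < 0
  · refine blowup_aux (fun t => -(φ t))
      (fun t => -(2 * A * Real.cosh (φ t)
          * Real.sqrt (B ^ 2 - 2 / (A * Real.cosh (φ t)))))
      (2 * Real.sqrt (-A)) (1/2)
      (mul_pos two_pos (Real.sqrt_pos.mpr (by linarith))) one_half_pos (fun t => (hder t).neg) ?_
    intro t
    simpa using bound_neg A B (φ t) hAneg
  · have hApos : 0 < A := lt_of_le_of_ne (not_lt.mp hAneg) (Ne.symm hA)
    have h2 : 2 < A * B ^ 2 := hcase.resolve_left hAneg
    refine blowup_aux φ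
      (fun t => 2 * A * Real.cosh (φ t)
          * Real.sqrt (B ^ 2 - 2 / (A * Real.cosh (φ t))))
      (Real.sqrt (A * (A * B ^ 2 - 2))) 1
      (Real.sqrt_pos.mpr (by nlinarith)) one_pos hder ?_
    intro t
    exact bound_pos A B (φ t) hApos h2
end
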